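/- arXiv:1507.00593 — 9 statements merged into one kernel-verified Lean document; each statement's English description precedes it below -/
import Mathlib

section
/- Every circle graph is a Naji graph: if a finite simple graph G is the interlacement graph of some double occurrence word, then the Naji equations of G have a solution over GF(2). -/
/-!
Read the word as points on a line: each letter `v` spans the interval between its two
occurrences, and two letters are interlaced exactly when their intervals cross. Put
`β(v, w) = 1` iff the first occurrence of `w` lies strictly inside the interval of `v`. Each
Naji equation then only involves the relative order of the (pairwise distinct) endpoints of at
most three intervals, and holds in every possible arrangement.
-/

/-- A Naji solution of the simple graph `G`: an assignment of `GF(2)` values to ordered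
pairs of distinct vertices (encoded as a function `V → V → ZMod 2` vanishing on the
diagonal) satisfying Naji's equations (a), (b), (c). -/
def NajiSolution {V : Type*} (G : SimpleGraph V) (β : V → V → ZMod 2) : Prop :=
  (∀ v, β v v = 0) ∧
  (∀ v w, G.Adj v w → β v w + β w v = 1) ∧
  (∀ v w x : V, v ≠ w → v ≠ x → w ≠ x →
    G.Adj v w → ¬ G.Adj v x → ¬ G.Adj w x → β x v + β x w = 0) ∧
  (∀ v w x : V, v ≠ w → v ≠ x → w ≠ x →
    G.Adj v w → G.Adj v x → ¬ G.Adj w x →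
    β v w + β v x + β w x + β x w = 1)

/-- A double occurrence word on the letter set `V`: every letter appears exactly twice. -/
def IsDOW {V : Type*} [DecidableEq V] (W : List V) : Prop := ∀ v : V, W.count v = 2

/-- Two letters are interlaced in `W` if they occur in the order `v,w,v,w` or `w,v,w,v`. -/
def Interlaced {V : Type*} (W : List V) (v w : V) : Prop :=
  [v, w, v, w].Sublist W ∨ [w, v, w, v].Sublist W

/-- The interlacement graph of a word: distinct letters are adjacent iff interlaced. -/
def interlacementGraph {V : Type*} (W : List V) : SimpleGraph V where
  Adj v w := v ≠ w ∧ Interlaced W v w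
  symm := ⟨fun _ _ h => ⟨h.1.symm, Or.symm h.2⟩⟩
  loopless := ⟨fun _ h => h.1 rfl⟩

/-- `G` is a circle graph if it is the interlacement graph of a double occurrence word. -/
def IsCircleGraph {V : Type*} [DecidableEq V] (G : SimpleGraph V) : Prop :=
  ∃ W : List V, IsDOW W ∧ interlacementGraph W = G

namespace List

variable {α : Type*}

theorem cons_sublist_drop_iff {a : α} {l W : List α} {n : ℕ} :
    (a :: l).Sublist (W.drop n) ↔ ∃ i, n ≤ i ∧ W[i]? = some a ∧ l.Sublist (W.drop (i + 1)) := by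
  induction W generalizing n with
  | nil => simp
  | cons b W ih =>
    cases n with
    | zero =>
      rw [drop_zero, sublist_cons_iff, ← drop_zero (l := W), ih]
      constructor
      · rintro (⟨i, -, ha, hl⟩ | ⟨r, hr, hl⟩)
        · exact ⟨i + 1, by omega, by simpa using ha, by simpa using hl⟩
        · obtain ⟨rfl, rfl⟩ := cons.inj hr
          exact ⟨0, le_rfl, rfl, by simpa using hl⟩
      · rintro ⟨_ | i, -, ha, hl⟩
        · obtain rfl : b = a := by simpa using ha
          exact Or.inr ⟨l, rfl, by simpa using hl⟩
        · exact Or.inl ⟨i, Nat.zero_le _, by simpa using ha, by simpa using hl⟩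
    | succ n =>
      rw [drop_succ_cons, ih]
      constructor
      · rintro ⟨i, hi, ha, hl⟩
        exact ⟨i + 1, by omega, by simpa using ha, by simpa using hl⟩
      · rintro ⟨_ | i, hi, ha, hl⟩
        · omega
        · exact ⟨i, by omega, by simpa using ha, by simpa using hl⟩

theorem exists_getElem?_eq_some_iff_of_count_eq_two [DecidableEq α] {W : List α} {a : α}
    (h : W.count a = 2) : ∃ i j : ℕ, i < j ∧ ∀ k, W[k]? = some a ↔ k = i ∨ k = j := by
  have twice : [a, a].Sublist W := replicate_sublist_iff (n := 2).2 h.ge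
  have not_thrice : ¬ [a, a, a].Sublist W := fun h3 => by
    have := replicate_sublist_iff (n := 3).1 h3
    omega
  rw [← drop_zero (l := W)] at twice not_thrice
  simp only [cons_sublist_drop_iff, nil_sublist, and_true, not_exists, not_and] at twice not_thrice
  obtain ⟨i, -, hi, j, hij, hj⟩ := twice
  refine ⟨i, j, hij, fun k => ⟨fun hk => ?_, by rintro (rfl | rfl) <;> assumption⟩⟩
  by_contra! hne
  rcases Nat.lt_or_gt_of_ne hne.1 with hki | hik
  · exact not_thrice k (Nat.zero_le _) hk i hki hi j hij hj
  rcases Nat.lt_or_gt_of_ne hne.2 with hkj | hjk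
  · exact not_thrice i (Nat.zero_le _) hi k hik hk j hkj hj
  · exact not_thrice i (Nat.zero_le _) hi j hij hj k hjk hk

end List

/-- Intervals `[left v, right v]` of natural numbers, no two of which share an endpoint. -/
structure ChordDiagram (V : Type*) where
  left : V → ℕ
  right : V → ℕ
  left_lt_right : ∀ v, left v < right v
  injective : Function.Injective (Sum.elim left right)

namespace ChordDiagram

variable {V : Type*} (C : ChordDiagram V)

def Crosses (v w : V) : Prop :=
  C.left v < C.left w ∧ C.left w < C.right v ∧ C.right v < C.right w ∨
    C.left w < C.left v ∧ C.left v < C.right w ∧ C.right w < C.right v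

def crossingGraph : SimpleGraph V where
  Adj := C.Crosses
  symm := ⟨fun _ _ h => Or.symm h⟩
  loopless := ⟨fun v h => by unfold Crosses at h; omega⟩

theorem crossingGraph_adj {v w : V} : C.crossingGraph.Adj v w ↔ C.Crosses v w := Iff.rfl

def opensWithin (v w : V) : ZMod 2 :=
  if C.left v < C.left w ∧ C.left w < C.right v then 1 else 0

theorem endpoints_ne {v w : V} (h : v ≠ w) :
    C.left v ≠ C.left w ∧ C.left v ≠ C.right w ∧ C.right v ≠ C.right w :=
  ⟨fun e => h (Sum.inl_injective (C.injective e)), fun e => Sum.inl_ne_inr (C.injective e),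
    fun e => h (Sum.inr_injective (C.injective e))⟩

theorem najiSolution_opensWithin : NajiSolution C.crossingGraph C.opensWithin := by
  refine ⟨fun v => by simp [opensWithin], ?_, ?_, ?_⟩
  · intro v w hvw
    simp only [crossingGraph_adj, Crosses, opensWithin] at *
    split_ifs <;> first | decide | omega
  · intro v w x hvw hvx hwx hcvw hcvx hcwx
    have := C.endpoints_ne hvw; have := C.endpoints_ne hvx; have := C.endpoints_ne hwx
    have := C.left_lt_right v; have := C.left_lt_right w; have := C.left_lt_right x
    simp only [crossingGraph_adj, Crosses, opensWithin] at *
    split_ifs <;> first | decide | omega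
  · intro v w x hvw hvx hwx hcvw hcvx hcwx
    have := C.endpoints_ne hvw; have := C.endpoints_ne hvx; have := C.endpoints_ne hwx
    have := C.left_lt_right v; have := C.left_lt_right w; have := C.left_lt_right x
    simp only [crossingGraph_adj, Crosses, opensWithin] at *
    split_ifs <;> first | decide | omega

variable {C} {W : List V}

def IsDiagramOf (C : ChordDiagram V) (W : List V) : Prop :=
  ∀ v k, W[k]? = some v ↔ k = C.left v ∨ k = C.right v

theorem IsDiagramOf.sublist_iff (hC : C.IsDiagramOf W) (v w : V) :
    [v, w, v, w].Sublist W ↔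
      C.left v < C.left w ∧ C.left w < C.right v ∧ C.right v < C.right w := by
  rw [IsDiagramOf] at hC
  rw [← List.drop_zero (l := W)]
  simp only [List.cons_sublist_drop_iff, List.nil_sublist, and_true, hC]
  constructor
  · rintro ⟨i, -, hi, j, hij, hj, k, hjk, hk, m, hkm, hm⟩
    have := C.left_lt_right v; have := C.left_lt_right w
    omega
  · rintro ⟨h₁, h₂, h₃⟩
    exact ⟨_, Nat.zero_le _, Or.inl rfl, _, h₁, Or.inl rfl, _, h₂, Or.inr rfl, _, h₃, Or.inr rfl⟩

theorem IsDiagramOf.interlaced_iff (hC : C.IsDiagramOf W) (v w : V) :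
    Interlaced W v w ↔ C.Crosses v w := by
  rw [Interlaced, Crosses, hC.sublist_iff, hC.sublist_iff]

theorem IsDiagramOf.interlacementGraph_eq (hC : C.IsDiagramOf W) :
    interlacementGraph W = C.crossingGraph := by
  ext v w
  change v ≠ w ∧ Interlaced W v w ↔ C.crossingGraph.Adj v w
  rw [hC.interlaced_iff]
  exact ⟨And.right, fun h => ⟨C.crossingGraph.ne_of_adj h, h⟩⟩

end ChordDiagram

theorem IsDOW.exists_chordDiagram {V : Type*} [DecidableEq V] {W : List V} (hW : IsDOW W) :
    ∃ C : ChordDiagram V, C.IsDiagramOf W := by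
  choose l r hlr hpos using fun v => List.exists_getElem?_eq_some_iff_of_count_eq_two (hW v)
  have letter_unique : ∀ {v w : V} {k : ℕ}, W[k]? = some v → W[k]? = some w → v = w :=
    fun hv hw => Option.some_injective _ (hv.symm.trans hw)
  have at_l v : W[l v]? = some v := (hpos v _).2 (Or.inl rfl)
  have at_r v : W[r v]? = some v := (hpos v _).2 (Or.inr rfl)
  refine ⟨⟨l, r, hlr, ?_⟩, hpos⟩
  rintro (v | v) (w | w) h <;> simp only [Sum.elim_inl, Sum.elim_inr] at h
  · rw [letter_unique (at_l v) (h ▸ at_l w)]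
  · obtain rfl := letter_unique (at_l v) (h ▸ at_r w)
    exact absurd h (hlr v).ne
  · obtain rfl := letter_unique (at_r v) (h ▸ at_l w)
    exact absurd h (hlr v).ne'
  · rw [letter_unique (at_r v) (h ▸ at_r w)]

theorem circleGraph_isNajiGraph_general {V : Type*} [DecidableEq V]
    (W : List V) (hW : IsDOW W) :
    ∃ β : V → V → ZMod 2, NajiSolution (interlacementGraph W) β := by
  obtain ⟨C, hC⟩ := hW.exists_chordDiagram
  rw [hC.interlacementGraph_eq]
  exact ⟨C.opensWithin, C.najiSolution_opensWithin⟩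

/-- Every circle graph is a Naji graph: the interlacement graph of any double occurrence
word admits a Naji solution over `GF(2)`. -/
theorem circleGraph_isNajiGraph {V : Type*} [Fintype V] [DecidableEq V]
    (W : List V) (hW : IsDOW W) :
    ∃ β : V → V → ZMod 2, NajiSolution (interlacementGraph W) β :=
  circleGraph_isNajiGraph_general W hW
end

section
/- If β is a Naji solution of a finite simple graph G, then β+ρ is a Naji solution of G, and for every vertex v of G, β+δ(v) is a Naji solution of G. -/
/-- The function δ(v): `δ(v)(v,w) = 1` for all `w ≠ v`, `δ(v)(w,v) = 1` when `vw` is an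
edge, and all other values `0`. -/
def najiDelta {V : Type*} [DecidableEq V] (G : SimpleGraph V) [DecidableRel G.Adj]
    (v : V) : V → V → ZMod 2 :=
  fun x y => if x = v ∧ y ≠ v then 1 else if y = v ∧ G.Adj v x then 1 else 0

/-- The function ρ: value `1` on every ordered pair of distinct vertices. -/
def najiRho (V : Type*) [DecidableEq V] : V → V → ZMod 2 :=
  fun x y => if x = y then 0 else 1

section Helpers

variable {V : Type*} [DecidableEq V] (G : SimpleGraph V) [DecidableRel G.Adj] {u x y : V}

lemma najiDelta_left (h : y ≠ u) : najiDelta G u u y = 1 := by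
  simp [najiDelta, h]

lemma najiDelta_off (hx : x ≠ u) (hy : y ≠ u) : najiDelta G u x y = 0 := by
  simp [najiDelta, hx, hy]

lemma najiDelta_adj (h : G.Adj u x) : najiDelta G u x u = 1 := by
  have hx : x ≠ u := fun hxu => G.irrefl (hxu ▸ h)
  simp [najiDelta, hx, h]

lemma najiDelta_nadj (h : ¬ G.Adj u x) : najiDelta G u x u = 0 := by
  by_cases hx : x = u
  · subst hx; simp [najiDelta, h]
  · simp [najiDelta, hx, h]

lemma najiDelta_diag (x : V) : najiDelta G u x x = 0 := by
  by_cases hx : x = u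
  · subst hx; simp [najiDelta]
  · simp [najiDelta, hx]

end Helpers

/-- If `β` is a Naji solution of `G`, then so are `β + ρ` and `β + δ(v)` for every
vertex `v`. -/
theorem najiSolution_add_rho_delta {V : Type*} [Fintype V] [DecidableEq V]
    (G : SimpleGraph V) [DecidableRel G.Adj] (β : V → V → ZMod 2)
    (hβ : NajiSolution G β) :
    NajiSolution G (β + najiRho V) ∧ ∀ v : V, NajiSolution G (β + najiDelta G v) := by
  obtain ⟨h0, ha, hb, hc⟩ := hβ
  constructor
  · refine ⟨fun v => ?_, fun v w h => ?_,
      fun v w x hvw hvx hwx h1 h2 h3 => ?_,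
      fun v w x hvw hvx hwx h1 h2 h3 => ?_⟩
    · simp [najiRho, h0]
    · have h' := ha v w h
      simp only [Pi.add_apply, najiRho, if_neg h.ne, if_neg h.ne']
      linear_combination h' + (by decide : (2:ZMod 2) = 0)
    · have h' := hb v w x hvw hvx hwx h1 h2 h3
      simp only [Pi.add_apply, najiRho, if_neg hvx.symm, if_neg hwx.symm]
      linear_combination h' + (by decide : (2:ZMod 2) = 0)
    · have h' := hc v w x hvw hvx hwx h1 h2 h3
      simp only [Pi.add_apply, najiRho, if_neg hvw, if_neg hvx, if_neg hwx,
        if_neg hwx.symm]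
      linear_combination h' + (by decide : (4:ZMod 2) = 0)
  · intro u
    refine ⟨fun v => ?_, fun v w h => ?_,
      fun v w x hvw hvx hwx h1 h2 h3 => ?_,
      fun v w x hvw hvx hwx h1 h2 h3 => ?_⟩
    · simp [Pi.add_apply, najiDelta_diag, h0]
    · have h' := ha v w h
      have hd : najiDelta G u v w + najiDelta G u w v = 0 := by
        by_cases hv : v = u
        · subst hv
          rw [najiDelta_left G h.ne', najiDelta_adj G h]
          decide
        · by_cases hw : w = u
          · subst hw
            rw [najiDelta_adj G h.symm, najiDelta_left G h.ne]
            decide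
          · rw [najiDelta_off G hv hw, najiDelta_off G hw hv]
            decide
      simp only [Pi.add_apply]
      linear_combination h' + hd
    · have h' := hb v w x hvw hvx hwx h1 h2 h3
      have hd : najiDelta G u x v + najiDelta G u x w = 0 := by
        by_cases hx : x = u
        · subst hx
          rw [najiDelta_left G hvx, najiDelta_left G hwx]
          decide
        · have e1 : najiDelta G u x v = 0 := by
            by_cases hv : v = u
            · subst hv; exact najiDelta_nadj G h2
            · exact najiDelta_off G hx hv
          have e2 : najiDelta G u x w = 0 := by
            by_cases hw : w = u
            · subst hw; exact najiDelta_nadj G h3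
            · exact najiDelta_off G hx hw
          rw [e1, e2]; decide
      simp only [Pi.add_apply]
      linear_combination h' + hd
    · have h' := hc v w x hvw hvx hwx h1 h2 h3
      have hd : najiDelta G u v w + najiDelta G u v x + najiDelta G u w x
          + najiDelta G u x w = 0 := by
        by_cases hv : v = u
        · subst hv
          rw [najiDelta_left G hvw.symm, najiDelta_left G hvx.symm,
            najiDelta_off G hvw.symm hvx.symm, najiDelta_off G hvx.symm hvw.symm]
          decide
        · by_cases hw : w = u
          · subst hw
            rw [najiDelta_adj G h1.symm, najiDelta_off G hvw hwx.symm,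
              najiDelta_left G hwx.symm, najiDelta_nadj G h3]
            decide
          · by_cases hx : x = u
            · subst hx
              rw [najiDelta_off G hvx hwx, najiDelta_adj G h2.symm,
                najiDelta_nadj G (fun hadj => h3 hadj.symm),
                najiDelta_left G hwx]
              decide
            · rw [najiDelta_off G hv hw, najiDelta_off G hv hx,
                najiDelta_off G hw hx, najiDelta_off G hx hw]
              decide
      simp only [Pi.add_apply]
      linear_combination h' + hd
end

section
/- If G is a Naji graph, v is a vertex of G, and X is any subset of V(G)∖{v}, then G has a Naji solution β such that X = {x ∈ V(G)∖{v} : β(x,v) = 1}. -/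
/-- If `G` is a Naji graph, `v` a vertex and `X ⊆ V(G) \ {v}`, then `G` has a Naji
solution `β` with `X = {x ≠ v : β(x,v) = 1}`. -/
theorem najiSolution_prescribed_column {V : Type*} [Fintype V] [DecidableEq V]
    (G : SimpleGraph V) (hG : ∃ β : V → V → ZMod 2, NajiSolution G β)
    (v : V) (X : Finset V) (hvX : v ∉ X) :
    ∃ β : V → V → ZMod 2, NajiSolution G β ∧ ∀ x : V, x ≠ v → (x ∈ X ↔ β x v = 1) := by
  classical
  obtain ⟨β, hβ0, hβa, hβb, hβc⟩ := hG
  -- `P y` : the entry `β y v` of the column at `v` must be flipped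
  set P : V → Prop := fun y => y ≠ v ∧ ¬ (y ∈ X ↔ β y v = 1) with hP
  -- the modified solution: flip row `y` (off-diagonal) and column `y` at neighbors of
  -- `y`, for every `y` with `P y`.
  set β' : V → V → ZMod 2 := fun a b =>
    β a b + (if P a ∧ a ≠ b then 1 else 0) + (if G.Adj a b ∧ P b then 1 else 0) with hβ'
  have hPv : ¬ P v := fun h => h.1 rfl
  refine ⟨β', ⟨?_, ?_, ?_, ?_⟩, ?_⟩
  · -- diagonal
    intro y
    simp only [hβ']
    rw [if_neg (fun h : P y ∧ y ≠ y => h.2 rfl),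
      if_neg (fun h : G.Adj y y ∧ P y => G.irrefl h.1), add_zero, add_zero, hβ0 y]
  · -- equation (a)
    intro p q hpq
    have h1 := hβa p q hpq
    have hne : p ≠ q := hpq.ne
    simp only [hβ']
    rw [if_congr (and_iff_left hne) rfl rfl, if_congr (and_iff_left hne.symm) rfl rfl,
      if_congr (and_iff_right hpq) rfl rfl, if_congr (and_iff_right hpq.symm) rfl rfl]
    revert h1
    generalize β p q = A
    generalize β q p = B
    generalize (if P p then (1 : ZMod 2) else 0) = s
    generalize (if P q then (1 : ZMod 2) else 0) = t
    revert A B s t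
    decide
  · -- equation (b)
    intro a b c hab hac hbc hAab hAac hAbc
    have h1 := hβb a b c hab hac hbc hAab hAac hAbc
    simp only [hβ']
    rw [if_congr (and_iff_left hac.symm) rfl rfl,
      if_neg (fun h : G.Adj c a ∧ P a => hAac h.1.symm),
      if_congr (and_iff_left hbc.symm) rfl rfl,
      if_neg (fun h : G.Adj c b ∧ P b => hAbc h.1.symm)]
    revert h1
    generalize β c a = A
    generalize β c b = B
    generalize (if P c then (1 : ZMod 2) else 0) = s
    revert A B s
    decide
  · -- equation (c)
    intro a b c hab hac hbc hAab hAac hAbc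
    have h1 := hβc a b c hab hac hbc hAab hAac hAbc
    simp only [hβ']
    rw [if_congr (and_iff_left hab) rfl rfl, if_congr (and_iff_right hAab) rfl rfl,
      if_congr (and_iff_left hac) rfl rfl, if_congr (and_iff_right hAac) rfl rfl,
      if_congr (and_iff_left hbc) rfl rfl, if_neg (fun h : G.Adj b c ∧ P c => hAbc h.1),
      if_congr (and_iff_left hbc.symm) rfl rfl,
      if_neg (fun h : G.Adj c b ∧ P b => hAbc h.1.symm)]
    revert h1
    generalize β a b = A
    generalize β a c = B
    generalize β b c = C
    generalize β c b = D
    generalize (if P a then (1 : ZMod 2) else 0) = s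
    generalize (if P b then (1 : ZMod 2) else 0) = t
    generalize (if P c then (1 : ZMod 2) else 0) = u
    revert A B C D s t u
    decide
  · -- the prescribed column
    intro x hx
    have hcol : β' x v = β x v + (if P x then 1 else 0) := by
      simp only [hβ']
      rw [if_congr (and_iff_left hx) rfl rfl,
        if_neg (fun h : G.Adj x v ∧ P v => hPv h.2), add_zero]
    by_cases hpx : P x
    · have h2 := hpx.2
      rw [hcol, if_pos hpx]
      constructor
      · intro hxX
        have h0 : β x v = 0 := by
          have hne1 : β x v ≠ 1 := fun h => h2 ⟨fun _ => h, fun _ => hxX⟩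
          revert hne1
          generalize β x v = A
          revert A
          decide
        rw [h0]
        decide
      · intro h
        have h0 : β x v = 0 := by
          revert h
          generalize β x v = A
          revert A
          decide
        by_contra hxX
        exact h2 (iff_of_false hxX (by rw [h0]; decide))
    · have hxiff : x ∈ X ↔ β x v = 1 := by
        by_contra h
        exact hpx ⟨hx, h⟩
      rw [hcol, if_neg hpx, add_zero]
      exact hxiff
end

section
/- A Naji graph is determined by its Naji solutions: if G and H are Naji graphs with the same finite vertex set V and the set of Naji solutions of G equals the set of Naji solutions of H, then G = H. -/
open scoped Classical in
/-- Shift a Naji solution of `H` by the homogeneous solution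
`δ_v(a,b) = [a = v][b ≠ v] + [H.Adj a v][b = v]`. -/
noncomputable def najiShift {V : Type*} (H : SimpleGraph V) (v : V)
    (β : V → V → ZMod 2) : V → V → ZMod 2 :=
  fun a b => β a b + (if a = v ∧ b ≠ v then 1 else 0) +
    (if b = v ∧ H.Adj a v then 1 else 0)

private lemma two_z2 : (2 : ZMod 2) = 0 := by decide

lemma najiShift_solution {V : Type*} (H : SimpleGraph V) (v : V)
    (β : V → V → ZMod 2) (hβ : NajiSolution H β) :
    NajiSolution H (najiShift H v β) := by
  obtain ⟨h0, ha, hb, hc⟩ := hβ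
  refine ⟨?_, ?_, ?_, ?_⟩
  · intro a
    show β a a + _ + _ = 0
    rw [if_neg (show ¬(a = v ∧ a ≠ v) from fun h' => h'.2 h'.1),
      if_neg (show ¬(a = v ∧ H.Adj a v) from fun h' => H.irrefl (h'.1 ▸ h'.2)),
      h0, add_zero, add_zero]
  · intro a b hab
    have h := ha a b hab
    have hne : a ≠ b := hab.ne
    show (β a b + _ + _) + (β b a + _ + _) = 1
    rcases eq_or_ne a v with hav | hav
    · have hbv : b ≠ v := fun h' => hne (hav.trans h'.symm)
      rw [if_pos ⟨hav, hbv⟩,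
        if_neg (show ¬(b = v ∧ H.Adj a v) from fun h' => hbv h'.1),
        if_neg (show ¬(b = v ∧ a ≠ v) from fun h' => hbv h'.1),
        if_pos (show a = v ∧ H.Adj b v from ⟨hav, hav ▸ hab.symm⟩)]
      linear_combination h + two_z2
    · rcases eq_or_ne b v with hbv | hbv
      · rw [if_neg (show ¬(a = v ∧ b ≠ v) from fun h' => hav h'.1),
          if_pos (show b = v ∧ H.Adj a v from ⟨hbv, hbv ▸ hab⟩),
          if_pos ⟨hbv, hav⟩,
          if_neg (show ¬(a = v ∧ H.Adj b v) from fun h' => hav h'.1)]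
        linear_combination h + two_z2
      · rw [if_neg (show ¬(a = v ∧ b ≠ v) from fun h' => hav h'.1),
          if_neg (show ¬(b = v ∧ H.Adj a v) from fun h' => hbv h'.1),
          if_neg (show ¬(b = v ∧ a ≠ v) from fun h' => hbv h'.1),
          if_neg (show ¬(a = v ∧ H.Adj b v) from fun h' => hav h'.1)]
        linear_combination h
  · intro a b x hab hax hbx hAdj hnax hnbx
    have h := hb a b x hab hax hbx hAdj hnax hnbx
    show (β x a + _ + _) + (β x b + _ + _) = 0
    rcases eq_or_ne x v with hxv | hxv
    · have hav : a ≠ v := fun h' => hax (h'.trans hxv.symm)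
      have hbv : b ≠ v := fun h' => hbx (h'.trans hxv.symm)
      rw [if_pos ⟨hxv, hav⟩,
        if_neg (show ¬(a = v ∧ H.Adj x v) from fun h' => hav h'.1),
        if_pos ⟨hxv, hbv⟩,
        if_neg (show ¬(b = v ∧ H.Adj x v) from fun h' => hbv h'.1)]
      linear_combination h + two_z2
    · rcases eq_or_ne a v with hav | hav
      · have hbv : b ≠ v := fun h' => hab (hav.trans h'.symm)
        rw [if_neg (show ¬(x = v ∧ a ≠ v) from fun h' => hxv h'.1),
          if_neg (show ¬(a = v ∧ H.Adj x v) from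
            fun h' => hnax (hav ▸ h'.2 : H.Adj x a).symm),
          if_neg (show ¬(x = v ∧ b ≠ v) from fun h' => hxv h'.1),
          if_neg (show ¬(b = v ∧ H.Adj x v) from fun h' => hbv h'.1)]
        linear_combination h
      · rcases eq_or_ne b v with hbv | hbv
        · rw [if_neg (show ¬(x = v ∧ a ≠ v) from fun h' => hxv h'.1),
            if_neg (show ¬(a = v ∧ H.Adj x v) from fun h' => hav h'.1),
            if_neg (show ¬(x = v ∧ b ≠ v) from fun h' => hxv h'.1),
            if_neg (show ¬(b = v ∧ H.Adj x v) from
              fun h' => hnbx (hbv ▸ h'.2 : H.Adj x b).symm)]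
          linear_combination h
        · rw [if_neg (show ¬(x = v ∧ a ≠ v) from fun h' => hxv h'.1),
            if_neg (show ¬(a = v ∧ H.Adj x v) from fun h' => hav h'.1),
            if_neg (show ¬(x = v ∧ b ≠ v) from fun h' => hxv h'.1),
            if_neg (show ¬(b = v ∧ H.Adj x v) from fun h' => hbv h'.1)]
          linear_combination h
  · intro a b x hab hax hbx hAdj1 hAdj2 hnbx
    have h := hc a b x hab hax hbx hAdj1 hAdj2 hnbx
    show (β a b + _ + _) + (β a x + _ + _) + (β b x + _ + _) + (β x b + _ + _) = 1
    rcases eq_or_ne a v with hav | hav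
    · have hbv : b ≠ v := fun h' => hab (hav.trans h'.symm)
      have hxv : x ≠ v := fun h' => hax (hav.trans h'.symm)
      rw [if_pos ⟨hav, hbv⟩,
        if_neg (show ¬(b = v ∧ H.Adj a v) from fun h' => hbv h'.1),
        if_pos ⟨hav, hxv⟩,
        if_neg (show ¬(x = v ∧ H.Adj a v) from fun h' => hxv h'.1),
        if_neg (show ¬(b = v ∧ x ≠ v) from fun h' => hbv h'.1),
        if_neg (show ¬(x = v ∧ H.Adj b v) from fun h' => hxv h'.1),
        if_neg (show ¬(x = v ∧ b ≠ v) from fun h' => hxv h'.1),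
        if_neg (show ¬(b = v ∧ H.Adj x v) from fun h' => hbv h'.1)]
      linear_combination h + two_z2
    · rcases eq_or_ne b v with hbv | hbv
      · have hxv : x ≠ v := fun h' => hbx (hbv.trans h'.symm)
        rw [if_neg (show ¬(a = v ∧ b ≠ v) from fun h' => hav h'.1),
          if_pos (show b = v ∧ H.Adj a v from ⟨hbv, hbv ▸ hAdj1⟩),
          if_neg (show ¬(a = v ∧ x ≠ v) from fun h' => hav h'.1),
          if_neg (show ¬(x = v ∧ H.Adj a v) from fun h' => hxv h'.1),
          if_pos ⟨hbv, hxv⟩,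
          if_neg (show ¬(x = v ∧ H.Adj b v) from fun h' => hxv h'.1),
          if_neg (show ¬(x = v ∧ b ≠ v) from fun h' => hxv h'.1),
          if_neg (show ¬(b = v ∧ H.Adj x v) from
            fun h' => hnbx (hbv ▸ h'.2 : H.Adj x b).symm)]
        linear_combination h + two_z2
      · rcases eq_or_ne x v with hxv | hxv
        · rw [if_neg (show ¬(a = v ∧ b ≠ v) from fun h' => hav h'.1),
            if_neg (show ¬(b = v ∧ H.Adj a v) from fun h' => hbv h'.1),
            if_neg (show ¬(a = v ∧ x ≠ v) from fun h' => hav h'.1),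
            if_pos (show x = v ∧ H.Adj a v from ⟨hxv, hxv ▸ hAdj2⟩),
            if_neg (show ¬(b = v ∧ x ≠ v) from fun h' => hbv h'.1),
            if_neg (show ¬(x = v ∧ H.Adj b v) from
              fun h' => hnbx (hxv ▸ h'.2 : H.Adj b x)),
            if_pos ⟨hxv, hbv⟩,
            if_neg (show ¬(b = v ∧ H.Adj x v) from fun h' => hbv h'.1)]
          linear_combination h + two_z2
        · rw [if_neg (show ¬(a = v ∧ b ≠ v) from fun h' => hav h'.1),
            if_neg (show ¬(b = v ∧ H.Adj a v) from fun h' => hbv h'.1),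
            if_neg (show ¬(a = v ∧ x ≠ v) from fun h' => hav h'.1),
            if_neg (show ¬(x = v ∧ H.Adj a v) from fun h' => hxv h'.1),
            if_neg (show ¬(b = v ∧ x ≠ v) from fun h' => hbv h'.1),
            if_neg (show ¬(x = v ∧ H.Adj b v) from fun h' => hxv h'.1),
            if_neg (show ¬(x = v ∧ b ≠ v) from fun h' => hxv h'.1),
            if_neg (show ¬(b = v ∧ H.Adj x v) from fun h' => hbv h'.1)]
          linear_combination h

lemma naji_subset_adj {V : Type*} (G H : SimpleGraph V)
    (hsub : ∀ β : V → V → ZMod 2, NajiSolution H β → NajiSolution G β)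
    (hne : ∃ β : V → V → ZMod 2, NajiSolution H β)
    {v w : V} (h : G.Adj v w) : H.Adj v w := by
  by_contra hn
  obtain ⟨β, hβ⟩ := hne
  have h1 := (hsub β hβ).2.1 v w h
  have hβ' := najiShift_solution H v β hβ
  have h2 := (hsub _ hβ').2.1 v w h
  have hvw : v ≠ w := h.ne
  have e1 : najiShift H v β v w = β v w + 1 := by
    show β v w + _ + _ = _
    rw [if_pos ⟨rfl, hvw.symm⟩,
      if_neg (show ¬(w = v ∧ H.Adj v v) from fun h' => hvw h'.1.symm), add_zero]
  have e2 : najiShift H v β w v = β w v := by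
    show β w v + _ + _ = _
    rw [if_neg (show ¬(w = v ∧ v ≠ v) from fun h' => hvw h'.1.symm),
      if_neg (show ¬(v = v ∧ H.Adj w v) from fun h' => hn h'.2.symm),
      add_zero, add_zero]
  rw [e1, e2] at h2
  have : (1 : ZMod 2) = 0 := by linear_combination h2 - h1
  exact one_ne_zero this

/-- A Naji graph is determined by its set of Naji solutions. -/
theorem naji_graph_determined {V : Type*} [Fintype V] [DecidableEq V]
    (G H : SimpleGraph V)
    (hG : ∃ β : V → V → ZMod 2, NajiSolution G β)
    (hH : ∃ β : V → V → ZMod 2, NajiSolution H β)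
    (hBB : {β : V → V → ZMod 2 | NajiSolution G β} = {β | NajiSolution H β}) :
    G = H := by
  have hGH : ∀ β : V → V → ZMod 2, NajiSolution G β → NajiSolution H β :=
    fun β hβ => (Set.ext_iff.mp hBB β).mp hβ
  have hHG : ∀ β : V → V → ZMod 2, NajiSolution H β → NajiSolution G β :=
    fun β hβ => (Set.ext_iff.mp hBB β).mpr hβ
  ext v w
  exact ⟨fun h => naji_subset_adj G H hHG hH h,
         fun h => naji_subset_adj H G hGH hG h⟩
end

section
/- Let v and w be two vertices of a connected circle graph G = I(W), where W is a double occurrence word. Then v and w appear consecutively in W (i.e., some appearance of v and some appearance of w occupy cyclically adjacent positions of W) if and only if there is an orientation of W whose corresponding Naji solution β satisfies β(x,v) = β(x,w) for all vertices x ∉ {v,w}. -/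
/-- An orientation of a double occurrence word: for each letter, one of its two
appearances is designated as initial (`pIn`) and the other as terminal (`pOut`). -/
structure WordOrientation {V : Type*} (W : List V) where
  pIn : V → Fin W.length
  pOut : V → Fin W.length
  ne : ∀ v, pIn v ≠ pOut v
  getIn : ∀ v, W.get (pIn v) = v
  getOut : ∀ v, W.get (pOut v) = v

/-- The Naji solution of `I(W)` corresponding to an orientation of `W`:
`β(v,w) = 0` iff, after cyclically permuting `W` to begin with `v^in`, the appearance
`w^out` precedes `v^out` (positions are compared by their cyclic offset from `v^in`). -/
def orientedBeta {V : Type*} (W : List V) (o : WordOrientation W) : V → V → ZMod 2 :=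
  fun v w =>
    if ((o.pOut w).val + W.length - (o.pIn v).val) % W.length <
        ((o.pOut v).val + W.length - (o.pIn v).val) % W.length then 0 else 1

/-!
A letter `x ∉ {v, w}` has `β(x,v) = β(x,w)` exactly when its chord `x^in x^out` does not
separate `v^out` from `w^out`. Rotating `W` so that `v^out` sits at position `0` changes
neither the interlacement graph nor `β`; then every other chord lies inside `(0, m)` or inside
`(m, L)`, where `m` is the position of `w^out`. Adding the chords of `v` and `w` to the side
they lie on yields an interval of positions that is a union of chords. Chords in disjoint
intervals do not interlace, so connectivity forces this interval to be all positions or none,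
that is `m = L - 1` or `m = 1`. Conversely, if `v, w` are adjacent, declaring these two
appearances terminal works, since no other chord has an endpoint between them.
-/

section CyclicOffset

def cyclicOffset (L c p : ℕ) : ℕ := (p + L - c) % L

variable {L c p q : ℕ}

lemma mod_eq_ite_of_lt_two_mul {x : ℕ} (h : x < 2 * L) : x % L = if x < L then x else x - L := by
  split_ifs with hx
  · exact Nat.mod_eq_of_lt hx
  · rw [Nat.mod_eq_sub_mod (not_lt.mp hx), Nat.mod_eq_of_lt (by omega)]

lemma cyclicOffset_eq_ite (hp : p < L) (hc : c < L) :
    cyclicOffset L c p = if c ≤ p then p - c else p + L - c := by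
  rw [cyclicOffset, mod_eq_ite_of_lt_two_mul (by omega)]
  split_ifs <;> omega

lemma cyclicOffset_lt (hL : 0 < L) : cyclicOffset L c p < L := Nat.mod_lt _ hL

lemma cyclicOffset_self : cyclicOffset L p p = 0 := by simp [cyclicOffset]

lemma cyclicOffset_cyclicOffset (hp : p < L) (hq : q < L) (hc : c < L) :
    cyclicOffset L (cyclicOffset L c q) (cyclicOffset L c p) = cyclicOffset L q p := by
  rw [cyclicOffset_eq_ite hp hc, cyclicOffset_eq_ite hq hc, cyclicOffset_eq_ite hp hq]
  split_ifs <;> rw [cyclicOffset_eq_ite (by omega) (by omega)] <;> split_ifs <;> omega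

lemma cyclicOffset_add_mod (hp : p < L) (hc : c < L) : (cyclicOffset L c p + c) % L = p := by
  rw [cyclicOffset_eq_ite hp hc]
  split_ifs
  · rw [Nat.sub_add_cancel ‹_›, Nat.mod_eq_of_lt hp]
  · rw [mod_eq_ite_of_lt_two_mul (by omega)]
    split_ifs <;> omega

lemma cyclicOffset_injective (hp : p < L) (hq : q < L) (hc : c < L)
    (h : cyclicOffset L c p = cyclicOffset L c q) : p = q := by
  rw [← cyclicOffset_add_mod hp hc, h, cyclicOffset_add_mod hq hc]

lemma cyclicOffset_lt_iff_of_succ {i j b : ℕ} (hi : i < L) (hq : q < L) (hb : b < L)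
    (hij : (i + 1) % L = j) (hqj : q ≠ j) (hbi : b ≠ i) (hbj : b ≠ j) :
    cyclicOffset L q i < cyclicOffset L q b ↔ cyclicOffset L q j < cyclicOffset L q b := by
  rw [mod_eq_ite_of_lt_two_mul (by omega)] at hij
  have hj : j < L := by split_ifs at hij <;> omega
  rw [cyclicOffset_eq_ite hi hq, cyclicOffset_eq_ite hj hq, cyclicOffset_eq_ite hb hq]
  split_ifs at hij ⊢ <;> omega

lemma both_lt_or_both_gt_of_cyclicOffset_lt_iff {a b m : ℕ} (ha : a < L) (hb : b < L)
    (hm : m < L) (ha0 : a ≠ 0) (hb0 : b ≠ 0) (ham : a ≠ m) (hbm : b ≠ m)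
    (h : cyclicOffset L a 0 < cyclicOffset L a b ↔ cyclicOffset L a m < cyclicOffset L a b) :
    (0 < a ∧ a < m ∧ 0 < b ∧ b < m) ∨ (m < a ∧ m < b) := by
  rw [cyclicOffset_eq_ite (by omega) ha, cyclicOffset_eq_ite hb ha,
    cyclicOffset_eq_ite hm ha] at h
  split_ifs at h <;> omega

end CyclicOffset

section Interlacing

variable {V : Type*} {W : List V} {x y : V}

lemma interlaced_comm : Interlaced W x y ↔ Interlaced W y x := or_comm

lemma Interlaced.append_comm {A B : List V} (h : Interlaced (A ++ B) x y) :
    Interlaced (B ++ A) x y := by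
  suffices key : ∀ {a b : V}, [a, b, a, b].Sublist (A ++ B) → Interlaced (B ++ A) a b by
    rcases h with h | h
    · exact key h
    · exact interlaced_comm.mp (key h)
  intro a b hab
  obtain ⟨l₁, l₂, hsplit, h₁, h₂⟩ := List.sublist_append_iff.mp hab
  have hswap := h₂.append h₁
  rcases l₁ with _ | ⟨_, _ | ⟨_, _ | ⟨_, _ | ⟨_, _ | ⟨_, _⟩⟩⟩⟩⟩ <;>
    simp only [List.nil_append, List.cons_append, List.cons.injEq] at hsplit <;>
    grind [Interlaced]

lemma interlaced_rotate_iff (k : ℕ) : Interlaced (W.rotate k) x y ↔ Interlaced W x y := by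
  rw [List.rotate_eq_drop_append_take_mod]
  conv_rhs => rw [← List.take_append_drop (k % W.length) W]
  exact ⟨Interlaced.append_comm, Interlaced.append_comm⟩

lemma interlacementGraph_rotate (k : ℕ) :
    interlacementGraph (W.rotate k) = interlacementGraph W := by
  ext x y
  simp only [interlacementGraph, interlaced_rotate_iff]

lemma Interlaced.exists_lt_lt (h : Interlaced W x y) :
    ∃ i j k : Fin W.length, i < j ∧ j < k ∧ W.get i = y ∧ W.get j = x ∧ W.get k = y := by
  have hsub : [y, x, y].Sublist W := by
    rcases h with h | h
    · exact (List.sublist_cons_self x [y, x, y]).trans h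
    · exact (List.sublist_append_left [y, x, y] [x]).trans h
  obtain ⟨f, hf⟩ := List.sublist_iff_exists_fin_orderEmbedding_get_eq.mp hsub
  exact ⟨f 0, f 1, f 2, f.strictMono (Fin.lt_def.mpr (by simp)),
    f.strictMono (Fin.lt_def.mpr (by simp)), (hf 0).symm, (hf 1).symm, (hf 2).symm⟩

lemma not_interlaced_of_forall_mem_Ico {s t : ℕ}
    (hx : ∀ i : Fin W.length, W.get i = x → i.val ∉ Set.Ico s t)
    (hy : ∀ i : Fin W.length, W.get i = y → i.val ∈ Set.Ico s t) : ¬ Interlaced W x y := by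
  intro h
  obtain ⟨i, j, k, hij, hjk, hi, hj, hk⟩ := h.exists_lt_lt
  have := hx j hj
  have := hy i hi
  have := hy k hk
  simp only [Set.mem_Ico, Fin.lt_def] at *
  omega

lemma forall_mem_Ico_or_forall_not_mem_Ico (hconn : (interlacementGraph W).Connected)
    {s t : ℕ} (hI : ∀ i j : Fin W.length, W.get i = W.get j →
      (i.val ∈ Set.Ico s t ↔ j.val ∈ Set.Ico s t)) :
    (∀ i : Fin W.length, i.val ∈ Set.Ico s t) ∨
      (∀ i : Fin W.length, i.val ∉ Set.Ico s t) := by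
  by_contra! ⟨⟨i, hi⟩, ⟨j, hj⟩⟩
  obtain ⟨walk⟩ := hconn.preconnected (W.get j) (W.get i)
  obtain ⟨d, -, hin, hout⟩ := walk.exists_boundary_dart
    {z | ∀ p : Fin W.length, W.get p = z → p.val ∈ Set.Ico s t}
    (fun p hp => (hI p j hp).2 hj) (fun h => hi (h i rfl))
  have hout' : ∀ p : Fin W.length, W.get p = d.toProd.2 → p.val ∉ Set.Ico s t := by
    intro p hp hpI
    exact hout fun q hq => (hI q p (hq.trans hp.symm)).2 hpI
  exact not_interlaced_of_forall_mem_Ico hout' hin (interlaced_comm.mp d.adj.2)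

end Interlacing

section Orientation

variable {V : Type*} {W : List V} {v w : V}

lemma val_ne_of_get_eq {p q : Fin W.length} {x y : V} (hp : W.get p = x) (hq : W.get q = y)
    (hxy : x ≠ y) : p.val ≠ q.val :=
  fun hpq => hxy (hp.symm.trans ((congrArg W.get (Fin.ext hpq)).trans hq))

lemma orientedBeta_eq_ite (o : WordOrientation W) (x y : V) :
    orientedBeta W o x y =
      if cyclicOffset W.length (o.pIn x) (o.pOut y) < cyclicOffset W.length (o.pIn x) (o.pOut x)
      then 0 else 1 := rfl

lemma orientedBeta_eq_orientedBeta_iff (o : WordOrientation W) (x y z : V) :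
    orientedBeta W o x y = orientedBeta W o x z ↔
      (cyclicOffset W.length (o.pIn x) (o.pOut y) < cyclicOffset W.length (o.pIn x) (o.pOut x) ↔
        cyclicOffset W.length (o.pIn x) (o.pOut z) <
          cyclicOffset W.length (o.pIn x) (o.pOut x)) := by
  rw [orientedBeta_eq_ite, orientedBeta_eq_ite]
  split_ifs with h1 h2 h2 <;> simp [h1, h2]

lemma both_lt_or_both_gt_of_orientedBeta_eq (o : WordOrientation W) {x : V}
    (h0 : (o.pOut v).val = 0) (hxv : x ≠ v) (hxw : x ≠ w)
    (hβ : orientedBeta W o x v = orientedBeta W o x w) :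
    (0 < (o.pIn x).val ∧ (o.pIn x).val < (o.pOut w).val ∧
        0 < (o.pOut x).val ∧ (o.pOut x).val < (o.pOut w).val) ∨
      ((o.pOut w).val < (o.pIn x).val ∧ (o.pOut w).val < (o.pOut x).val) := by
  rw [orientedBeta_eq_orientedBeta_iff, h0] at hβ
  exact both_lt_or_both_gt_of_cyclicOffset_lt_iff (o.pIn x).isLt (o.pOut x).isLt
    (o.pOut w).isLt (h0 ▸ val_ne_of_get_eq (o.getIn x) (o.getOut v) hxv)
    (h0 ▸ val_ne_of_get_eq (o.getOut x) (o.getOut v) hxv)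
    (val_ne_of_get_eq (o.getIn x) (o.getOut w) hxw)
    (val_ne_of_get_eq (o.getOut x) (o.getOut w) hxw) hβ

variable [DecidableEq V]

lemma IsDOW.rotate (hW : IsDOW W) (k : ℕ) : IsDOW (W.rotate k) :=
  fun x => ((W.rotate_perm k).count_eq x).trans (hW x)

lemma IsDOW.card_filter_get_eq (hW : IsDOW W) (x : V) :
    Finset.card {i : Fin W.length | W.get i = x} = 2 := by
  rw [← hW x]
  exact Fin.card_filter_univ_eq_vector_get_eq_count x (⟨W, rfl⟩ : List.Vector V W.length)

lemma IsDOW.exists_get_eq (hW : IsDOW W) (x : V) : ∃ p : Fin W.length, W.get p = x :=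
  List.mem_iff_get.mp (List.count_pos_iff.mp (by rw [hW x]; norm_num))

lemma IsDOW.exists_ne_get_eq (hW : IsDOW W) (p : Fin W.length) :
    ∃ q, q ≠ p ∧ W.get q = W.get p := by
  obtain ⟨q, hq, hqp⟩ := Finset.exists_mem_ne (s := {q | W.get q = W.get p})
    (by rw [hW.card_filter_get_eq]; norm_num) p
  exact ⟨q, hqp, by simpa using hq⟩

lemma IsDOW.eq_pIn_or_eq_pOut (hW : IsDOW W) (o : WordOrientation W) {i : Fin W.length} {x : V}
    (hi : W.get i = x) : i = o.pIn x ∨ i = o.pOut x := by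
  have hpair : ({o.pIn x, o.pOut x} : Finset (Fin W.length)) = ({i | W.get i = x} : Finset _) := by
    refine Finset.eq_of_subset_of_card_le ?_ ?_
    · simp only [Finset.insert_subset_iff, Finset.singleton_subset_iff, Finset.mem_filter,
        Finset.mem_univ, o.getIn, o.getOut, and_self]
    · rw [hW.card_filter_get_eq, Finset.card_pair (o.ne x)]
  simpa using hpair.ge (by simpa using hi)

lemma IsDOW.iff_of_get_eq (hW : IsDOW W) (o : WordOrientation W) {P : Fin W.length → Prop}
    (hP : ∀ x, P (o.pIn x) ↔ P (o.pOut x)) {i j : Fin W.length} (hij : W.get i = W.get j) :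
    P i ↔ P j := by
  obtain ⟨x, hi, hj⟩ :
      ∃ x, (i = o.pIn x ∨ i = o.pOut x) ∧ (j = o.pIn x ∨ j = o.pOut x) :=
    ⟨_, hW.eq_pIn_or_eq_pOut o rfl, hW.eq_pIn_or_eq_pOut o hij.symm⟩
  have := hP x
  rcases hi with rfl | rfl <;> rcases hj with rfl | rfl <;> tauto

lemma IsDOW.exists_orientation (hW : IsDOW W) (out : V → Fin W.length)
    (hout : ∀ x, W.get (out x) = x) : ∃ o : WordOrientation W, o.pOut = out := by
  choose pIn hne hget using fun x => hW.exists_ne_get_eq (out x)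
  exact ⟨⟨pIn, out, hne, fun x => (hget x).trans (hout x), hout⟩, rfl⟩

end Orientation

section Rotation

variable {V : Type*} {W : List V} {v w : V}

def rotatePos (c p : Fin W.length) : Fin (W.rotate c).length :=
  ⟨cyclicOffset W.length c p, by rw [List.length_rotate]; exact cyclicOffset_lt c.pos⟩

lemma get_rotatePos (c p : Fin W.length) : (W.rotate c).get (rotatePos c p) = W.get p := by
  simp only [List.get_eq_getElem, rotatePos, List.getElem_rotate]
  congr 1
  exact cyclicOffset_add_mod p.isLt c.isLt

def WordOrientation.rotate (o : WordOrientation W) (c : Fin W.length) :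
    WordOrientation (W.rotate c) where
  pIn x := rotatePos c (o.pIn x)
  pOut x := rotatePos c (o.pOut x)
  ne x h := o.ne x <| Fin.ext <|
    cyclicOffset_injective (o.pIn x).isLt (o.pOut x).isLt c.isLt (congrArg Fin.val h)
  getIn x := (get_rotatePos c _).trans (o.getIn x)
  getOut x := (get_rotatePos c _).trans (o.getOut x)

lemma orientedBeta_rotate (o : WordOrientation W) (c : Fin W.length) :
    orientedBeta (W.rotate c) (o.rotate c) = orientedBeta W o := by
  funext x y
  simp only [orientedBeta_eq_ite, List.length_rotate, WordOrientation.rotate, rotatePos]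
  rw [cyclicOffset_cyclicOffset (o.pOut y).isLt (o.pIn x).isLt c.isLt,
    cyclicOffset_cyclicOffset (o.pOut x).isLt (o.pIn x).isLt c.isLt]

lemma WordOrientation.rotate_pOut_self (o : WordOrientation W) (v : V) :
    ((o.rotate (o.pOut v)).pOut v).val = 0 :=
  cyclicOffset_self

def OccursJustBefore (W : List V) (v w : V) : Prop :=
  ∃ i j : Fin W.length, W.get i = v ∧ W.get j = w ∧ (i.val + 1) % W.length = j.val

lemma occursJustBefore_or_occursJustBefore_iff :
    OccursJustBefore W v w ∨ OccursJustBefore W w v ↔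
      ∃ i j : Fin W.length, W.get i = v ∧ W.get j = w ∧
        ((i.val + 1) % W.length = j.val ∨ (j.val + 1) % W.length = i.val) := by
  constructor
  · rintro (⟨i, j, hi, hj, h⟩ | ⟨j, i, hj, hi, h⟩)
    exacts [⟨i, j, hi, hj, Or.inl h⟩, ⟨i, j, hi, hj, Or.inr h⟩]
  · rintro ⟨i, j, hi, hj, h | h⟩
    exacts [Or.inl ⟨i, j, hi, hj, h⟩, Or.inr ⟨j, i, hj, hi, h⟩]

lemma OccursJustBefore.of_rotate {c : ℕ} (h : OccursJustBefore (W.rotate c) v w) :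
    OccursJustBefore W v w := by
  obtain ⟨i, j, hi, hj, hij⟩ := h
  have hL : 0 < W.length := by simpa using i.pos
  refine ⟨⟨(i + c) % W.length, Nat.mod_lt _ hL⟩, ⟨(j + c) % W.length, Nat.mod_lt _ hL⟩,
    by rw [← hi, List.get_rotate], by rw [← hj, List.get_rotate], ?_⟩
  simp only [List.length_rotate] at hij
  simp only [← hij, Nat.mod_add_mod, Nat.add_right_comm]

end Rotation

section Consecutive

variable {V : Type*} [DecidableEq V] {W : List V} {v w : V}

lemma exists_orientation_of_occursJustBefore (hW : IsDOW W) (hvw : v ≠ w)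
    (h : OccursJustBefore W v w) :
    ∃ o : WordOrientation W, ∀ x, x ≠ v → x ≠ w →
      orientedBeta W o x v = orientedBeta W o x w := by
  obtain ⟨i, j, hi, hj, hij⟩ := h
  choose f hf using hW.exists_get_eq
  obtain ⟨o, ho⟩ :=
    hW.exists_orientation (fun x => if x = v then i else if x = w then j else f x) (by
      intro x
      split_ifs <;> simp only [*])
  refine ⟨o, fun x hxv hxw => ?_⟩
  have hv : o.pOut v = i := by simp [ho]
  have hw : o.pOut w = j := by simp [ho, hvw.symm]
  rw [orientedBeta_eq_orientedBeta_iff, hv, hw]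
  exact cyclicOffset_lt_iff_of_succ i.isLt (o.pIn x).isLt (o.pOut x).isLt hij
    (val_ne_of_get_eq (o.getIn x) hj hxw) (val_ne_of_get_eq (o.getOut x) hi hxv)
    (val_ne_of_get_eq (o.getOut x) hj hxw)

lemma forall_mem_Ico_or_forall_not_mem_Ico_of_orientedBeta_eq (hW : IsDOW W)
    (hconn : (interlacementGraph W).Connected) (o : WordOrientation W)
    (h0 : (o.pOut v).val = 0)
    (hβ : ∀ x, x ≠ v → x ≠ w → orientedBeta W o x v = orientedBeta W o x w)
    {s t : ℕ} (hs : s ≤ 1) (ht : (o.pOut w).val ≤ t) (ht' : t ≤ (o.pOut w).val + 1)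
    (hv : (o.pIn v).val ∈ Set.Ico s t ↔ (o.pOut v).val ∈ Set.Ico s t)
    (hw : (o.pIn w).val ∈ Set.Ico s t ↔ (o.pOut w).val ∈ Set.Ico s t) :
    (∀ i : Fin W.length, i.val ∈ Set.Ico s t) ∨
      (∀ i : Fin W.length, i.val ∉ Set.Ico s t) := by
  refine forall_mem_Ico_or_forall_not_mem_Ico hconn fun i j hij =>
    hW.iff_of_get_eq o (P := fun p => p.val ∈ Set.Ico s t) (fun x => ?_) hij
  rcases eq_or_ne x v with rfl | hxv
  · exact hv
  rcases eq_or_ne x w with rfl | hxw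
  · exact hw
  rcases both_lt_or_both_gt_of_orientedBeta_eq o h0 hxv hxw (hβ x hxv hxw) with h | h <;>
    simp only [Set.mem_Ico] <;> omega

lemma occursJustBefore_of_orientedBeta_eq (hW : IsDOW W)
    (hconn : (interlacementGraph W).Connected) (hvw : v ≠ w) (o : WordOrientation W)
    (h0 : (o.pOut v).val = 0)
    (hβ : ∀ x, x ≠ v → x ≠ w → orientedBeta W o x v = orientedBeta W o x w) :
    OccursJustBefore W v w ∨ OccursJustBefore W w v := by
  set m := (o.pOut w).val with hm
  have hmL : m < W.length := (o.pOut w).isLt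
  have hm0 : m ≠ 0 := h0 ▸ val_ne_of_get_eq (o.getOut w) (o.getOut v) hvw.symm
  have hvm : (o.pIn v).val ≠ m := val_ne_of_get_eq (o.getIn v) (o.getOut w) hvw
  have hw0 : (o.pIn w).val ≠ 0 := h0 ▸ val_ne_of_get_eq (o.getIn w) (o.getOut v) hvw.symm
  have hwm : (o.pIn w).val ≠ m := fun h => o.ne w (Fin.ext h)
  -- `[s, t)` is the arc `(0, m)` together with `v^out = 0` if `v^in < m` and with `w^out = m`
  -- if `w^in < m`, hence a union of chords.
  set s := if (o.pIn v).val < m then 0 else 1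
  set t := if (o.pIn w).val < m then m + 1 else m
  have hs : s ≤ 1 := by simp only [s]; split_ifs <;> omega
  have ht : m ≤ t ∧ t ≤ m + 1 := by simp only [t]; split_ifs <;> omega
  rcases forall_mem_Ico_or_forall_not_mem_Ico_of_orientedBeta_eq hW hconn o h0 hβ hs ht.1 ht.2
      (by simp only [Set.mem_Ico, s, t]; split_ifs <;> omega)
      (by simp only [Set.mem_Ico, s, t]; split_ifs <;> omega) with hall | hnone
  · have hlast := hall ⟨W.length - 1, by omega⟩
    simp only [Set.mem_Ico, t] at hlast
    refine Or.inr ⟨o.pOut w, o.pOut v, o.getOut w, o.getOut v, ?_⟩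
    rw [h0, ← hm, show m + 1 = W.length by split_ifs at hlast <;> omega, Nat.mod_self]
  · have hone := hnone ⟨1, by omega⟩
    simp only [Set.mem_Ico, t] at hone
    refine Or.inl ⟨o.pOut v, o.pOut w, o.getOut v, o.getOut w, ?_⟩
    rw [h0, ← hm, Nat.mod_eq_of_lt (by omega)]
    split_ifs at hone <;> omega

end Consecutive

theorem consecutive_iff_orientation_general {V : Type*} [DecidableEq V]
    (W : List V) (hW : IsDOW W) (hconn : (interlacementGraph W).Connected)
    (v w : V) (hvw : v ≠ w) :
    (∃ i j : Fin W.length, W.get i = v ∧ W.get j = w ∧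
      ((i.val + 1) % W.length = j.val ∨ (j.val + 1) % W.length = i.val)) ↔
    (∃ o : WordOrientation W, ∀ x : V, x ≠ v → x ≠ w →
      orientedBeta W o x v = orientedBeta W o x w) := by
  rw [← occursJustBefore_or_occursJustBefore_iff]
  constructor
  · rintro (h | h)
    · exact exists_orientation_of_occursJustBefore hW hvw h
    · obtain ⟨o, ho⟩ := exists_orientation_of_occursJustBefore hW hvw.symm h
      exact ⟨o, fun x hxv hxw => (ho x hxw hxv).symm⟩
  · rintro ⟨o, hβ⟩
    have hrot := occursJustBefore_of_orientedBeta_eq (hW.rotate _)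
      (by rwa [interlacementGraph_rotate]) hvw (o.rotate (o.pOut v)) (o.rotate_pOut_self v)
      (by simpa only [orientedBeta_rotate] using hβ)
    exact hrot.imp OccursJustBefore.of_rotate OccursJustBefore.of_rotate

/-- Two vertices `v ≠ w` of a connected circle graph `G = I(W)` appear consecutively
(cyclically) in `W` iff some orientation of `W` has corresponding Naji solution `β`
with `β(x,v) = β(x,w)` for all `x ∉ {v,w}`. -/
theorem consecutive_iff_orientation {V : Type*} [Fintype V] [DecidableEq V]
    (W : List V) (hW : IsDOW W) (hconn : (interlacementGraph W).Connected)
    (v w : V) (hvw : v ≠ w) :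
    (∃ i j : Fin W.length, W.get i = v ∧ W.get j = w ∧
      ((i.val + 1) % W.length = j.val ∨ (j.val + 1) % W.length = i.val)) ↔
    (∃ o : WordOrientation W, ∀ x : V, x ≠ v → x ≠ w →
      orientedBeta W o x v = orientedBeta W o x w) :=
  consecutive_iff_orientation_general W hW hconn v w hvw
end

section
/- If finite simple graphs G and H are locally equivalent, then G is a Naji graph if and only if H is a Naji graph. -/
/-- The local complement of `G` at `v`: the adjacency of every pair of neighbours of `v`
is reversed, all other adjacencies are unchanged. -/
def localComp {V : Type*} (G : SimpleGraph V) (v : V) : SimpleGraph V where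
  Adj x y := x ≠ y ∧ Xor' (G.Adj x y) (G.Adj v x ∧ G.Adj v y)
  symm := by
    constructor
    rintro x y ⟨h1, h2⟩
    refine ⟨h1.symm, ?_⟩
    rwa [G.adj_comm y x, and_comm]
  loopless := ⟨fun _ h => h.1 rfl⟩

/-- Two graphs are locally equivalent if one is obtained from the other by a sequence of
local complementations. -/
def LocallyEquivalent {V : Type*} (G H : SimpleGraph V) : Prop :=
  Relation.ReflTransGen (fun A B => ∃ v : V, B = localComp A v) G H

/-!
Local complementation at `v` turns a Naji solution `β` of `G` into one of `G^v`: off the diagonal,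
add `β v y` to `β x y` when `x` is a neighbour of `v`, and `β v x` otherwise. Every Naji equation
of `G^v` involves three vertices; once we know which of them are neighbours of `v`, their
adjacencies in `G` can be read off from those in `G^v`, and the equation becomes a GF(2)-linear
combination of Naji equations of `G` on these vertices and `v`. Local complementation is an involution, so the Naji property is
transported in both directions along each step.
-/

section

variable {V : Type*} {G : SimpleGraph V} {β : V → V → ZMod 2} {v x y : V}

theorem localComp_adj : (localComp G v).Adj x y ↔
    x ≠ y ∧ (G.Adj x y ∧ ¬(G.Adj v x ∧ G.Adj v y) ∨ (G.Adj v x ∧ G.Adj v y) ∧ ¬G.Adj x y) :=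
  Iff.rfl

theorem localComp_adj_iff_of_adj_of_adj (hx : G.Adj v x) (hy : G.Adj v y) (hxy : x ≠ y) :
    (localComp G v).Adj x y ↔ ¬ G.Adj x y := by
  simp [localComp_adj, hxy, hx, hy]

theorem localComp_adj_iff_of_not_adj_left (hx : ¬ G.Adj v x) :
    (localComp G v).Adj x y ↔ G.Adj x y := by
  simpa [localComp_adj, hx] using fun h : G.Adj x y => h.ne

theorem localComp_adj_iff_of_not_adj_right (hy : ¬ G.Adj v y) :
    (localComp G v).Adj x y ↔ G.Adj x y := by
  rw [SimpleGraph.adj_comm, localComp_adj_iff_of_not_adj_left hy, SimpleGraph.adj_comm]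

theorem localComp_localComp (G : SimpleGraph V) (v : V) : localComp (localComp G v) v = G := by
  have hv : ∀ z, (localComp G v).Adj v z ↔ G.Adj v z := fun _ =>
    localComp_adj_iff_of_not_adj_left (G.loopless.irrefl v)
  ext x y
  by_cases hx : G.Adj v x
  · by_cases hy : G.Adj v y
    · by_cases hxy : x = y
      · subst hxy
        simp only [SimpleGraph.irrefl]
      · rw [localComp_adj_iff_of_adj_of_adj ((hv x).2 hx) ((hv y).2 hy) hxy,
          localComp_adj_iff_of_adj_of_adj hx hy hxy, not_not]
    · rw [localComp_adj_iff_of_not_adj_right (mt (hv y).1 hy),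
        localComp_adj_iff_of_not_adj_right hy]
  · rw [localComp_adj_iff_of_not_adj_left (mt (hv x).1 hx),
      localComp_adj_iff_of_not_adj_left hx]

open Classical in
noncomputable def najiLocalComp (G : SimpleGraph V) (v : V) (β : V → V → ZMod 2) :
    V → V → ZMod 2 :=
  fun x y => if x = y then 0 else β x y + β v (if G.Adj v x then y else x)

theorem najiLocalComp_of_adj (hxy : x ≠ y) (hx : G.Adj v x) :
    najiLocalComp G v β x y = β x y + β v y := by
  simp [najiLocalComp, hxy, hx]

theorem najiLocalComp_of_not_adj (hxy : x ≠ y) (hx : ¬ G.Adj v x) :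
    najiLocalComp G v β x y = β x y + β v x := by
  simp [najiLocalComp, hxy, hx]

namespace NajiSolution

variable {w a b c : V}

theorem equation_a (hβ : NajiSolution G β) (h : G.Adj v w) : β v w + β w v = 1 :=
  hβ.2.1 v w h

theorem equation_b (hβ : NajiSolution G β) (hvw : G.Adj v w) (hvx : ¬ G.Adj v x)
    (hwx : ¬ G.Adj w x) (hv : v ≠ x) (hw : w ≠ x) : β x v + β x w = 0 :=
  hβ.2.2.1 v w x hvw.ne hv hw hvw hvx hwx

theorem equation_c (hβ : NajiSolution G β) (hvw : G.Adj v w) (hvx : G.Adj v x)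
    (hwx : ¬ G.Adj w x) (hw : w ≠ x) : β v w + β v x + β w x + β x w = 1 :=
  hβ.2.2.2 v w x hvw.ne hvx.ne hw hvw hvx hwx

theorem localComp_equation_a (hβ : NajiSolution G β) (h : (localComp G v).Adj x y) :
    najiLocalComp G v β x y + najiLocalComp G v β y x = 1 := by
  wlog hyx : G.Adj v y → G.Adj v x generalizing x y
  · linear_combination this h.symm (by tauto)
  have hxy : x ≠ y := h.ne
  by_cases hx : G.Adj v x
  · rw [najiLocalComp_of_adj hxy hx]
    by_cases hy : G.Adj v y
    · rw [najiLocalComp_of_adj hxy.symm hy]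
      rw [localComp_adj_iff_of_adj_of_adj hx hy hxy] at h
      linear_combination hβ.equation_c hx hy h hxy
    · rw [najiLocalComp_of_not_adj hxy.symm hy]
      rw [localComp_adj_iff_of_not_adj_right hy] at h
      linear_combination (norm := (ring_nf; reduce_mod_char)) hβ.equation_a h
  · have hy : ¬ G.Adj v y := mt hyx hx
    rw [najiLocalComp_of_not_adj hxy hx, najiLocalComp_of_not_adj hxy.symm hy]
    rw [localComp_adj_iff_of_not_adj_left hx] at h
    linear_combination hβ.equation_a h +
      hβ.equation_b h (mt G.adj_symm hx) (mt G.adj_symm hy) (G.ne_of_adj_of_not_adj h hy)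
        (G.ne_of_adj_of_not_adj h.symm hx)

theorem localComp_equation_b (hβ : NajiSolution G β) (hab : (localComp G v).Adj a b)
    (hac : ¬ (localComp G v).Adj a c) (hbc : ¬ (localComp G v).Adj b c) (ha : a ≠ c)
    (hb : b ≠ c) : najiLocalComp G v β c a + najiLocalComp G v β c b = 0 := by
  wlog hba : G.Adj v b → G.Adj v a generalizing a b
  · linear_combination this hab.symm hbc hac hb ha (by tauto)
  by_cases hvc : G.Adj v c
  · rw [najiLocalComp_of_adj ha.symm hvc, najiLocalComp_of_adj hb.symm hvc]
    by_cases hva : G.Adj v a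
    · by_cases hvb : G.Adj v b
      · have hne : a ≠ b := hab.ne
        rw [localComp_adj_iff_of_adj_of_adj hva hvb hne] at hab
        rw [localComp_adj_iff_of_adj_of_adj hva hvc ha, not_not] at hac
        rw [localComp_adj_iff_of_adj_of_adj hvb hvc hb, not_not] at hbc
        linear_combination (norm := (ring_nf; reduce_mod_char))
          hβ.equation_c hac.symm hbc.symm hab hne + hβ.equation_c hva hvb hab hne
      · rw [localComp_adj_iff_of_not_adj_right hvb] at hab
        rw [localComp_adj_iff_of_adj_of_adj hva hvc ha, not_not] at hac
        rw [localComp_adj_iff_of_not_adj_left hvb] at hbc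
        have hvb' : v ≠ b := G.ne_of_adj_of_not_adj hvc hbc
        linear_combination (norm := (ring_nf; reduce_mod_char))
          hβ.equation_b hvc.symm (mt G.adj_symm hbc) hvb hb.symm hvb' +
          hβ.equation_c hab hva.symm (mt G.adj_symm hvb) hvb'.symm +
          hβ.equation_c hab hac hbc hb + hβ.equation_a hva + hβ.equation_a hac
    · have hvb : ¬ G.Adj v b := mt hba hva
      rw [localComp_adj_iff_of_not_adj_left hva] at hab hac
      rw [localComp_adj_iff_of_not_adj_left hvb] at hbc
      linear_combination
        hβ.equation_b hab (mt G.adj_symm hva) (mt G.adj_symm hvb)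
          (G.ne_of_adj_of_not_adj hvc hac).symm (G.ne_of_adj_of_not_adj hvc hbc).symm +
        hβ.equation_b hab hac hbc ha hb
  · rw [najiLocalComp_of_not_adj ha.symm hvc, najiLocalComp_of_not_adj hb.symm hvc]
    rw [localComp_adj_iff_of_not_adj_right hvc] at hac hbc
    by_cases hvb : G.Adj v b
    · have hva : G.Adj v a := hba hvb
      rw [localComp_adj_iff_of_adj_of_adj hva hvb hab.ne] at hab
      have hvc' : v ≠ c := G.ne_of_adj_of_not_adj hva (mt G.adj_symm hac)
      linear_combination (norm := (ring_nf; reduce_mod_char))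
        hβ.equation_b hva hvc hac hvc' ha + hβ.equation_b hvb hvc hbc hvc' hb
    · rw [localComp_adj_iff_of_not_adj_right hvb] at hab
      linear_combination (norm := (ring_nf; reduce_mod_char)) hβ.equation_b hab hac hbc ha hb

theorem localComp_equation_c_of_adj (hβ : NajiSolution G β) (hva : G.Adj v a)
    (hcb : G.Adj v c → G.Adj v b) (hab : (localComp G v).Adj a b)
    (hac : (localComp G v).Adj a c) (hbc : ¬ (localComp G v).Adj b c) (hb : b ≠ c) :
    najiLocalComp G v β a b + najiLocalComp G v β a c + najiLocalComp G v β b c +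
      najiLocalComp G v β c b = 1 := by
  have hab' : a ≠ b := hab.ne
  have hac' : a ≠ c := hac.ne
  rw [najiLocalComp_of_adj hab' hva, najiLocalComp_of_adj hac' hva]
  by_cases hvb : G.Adj v b
  · by_cases hvc : G.Adj v c
    · rw [localComp_adj_iff_of_adj_of_adj hva hvb hab'] at hab
      rw [localComp_adj_iff_of_adj_of_adj hva hvc hac'] at hac
      rw [localComp_adj_iff_of_adj_of_adj hvb hvc hb, not_not] at hbc
      rw [najiLocalComp_of_adj hb hvb, najiLocalComp_of_adj hb.symm hvc]
      linear_combination (norm := (ring_nf; reduce_mod_char))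
        hβ.equation_a hbc +
        hβ.equation_b hbc (mt G.adj_symm hab) (mt G.adj_symm hac) hab'.symm hac'.symm
    · rw [localComp_adj_iff_of_adj_of_adj hva hvb hab'] at hab
      rw [localComp_adj_iff_of_not_adj_right hvc] at hac hbc
      rw [najiLocalComp_of_adj hb hvb, najiLocalComp_of_not_adj hb.symm hvc]
      have hvc' : v ≠ c := G.ne_of_adj_of_not_adj hvb (mt G.adj_symm hbc)
      linear_combination (norm := (ring_nf; reduce_mod_char))
        hβ.equation_c hva hvb hab hab' + hβ.equation_c hva.symm hac hvc hvc' +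
        hβ.equation_b hvb hvc hbc hvc' hb +
        hβ.equation_b hac hab (mt G.adj_symm hbc) hab' hb.symm + hβ.equation_a hva
  · have hvc : ¬ G.Adj v c := mt hcb hvb
    rw [localComp_adj_iff_of_not_adj_right hvb] at hab
    rw [localComp_adj_iff_of_not_adj_right hvc] at hac
    rw [localComp_adj_iff_of_not_adj_left hvb] at hbc
    rw [najiLocalComp_of_not_adj hb hvb, najiLocalComp_of_not_adj hb.symm hvc]
    linear_combination (norm := (ring_nf; reduce_mod_char)) hβ.equation_c hab hac hbc hb

theorem localComp_equation_c_of_not_adj (hβ : NajiSolution G β) (hva : ¬ G.Adj v a)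
    (hcb : G.Adj v c → G.Adj v b) (hab : (localComp G v).Adj a b)
    (hac : (localComp G v).Adj a c) (hbc : ¬ (localComp G v).Adj b c) (hb : b ≠ c) :
    najiLocalComp G v β a b + najiLocalComp G v β a c + najiLocalComp G v β b c +
      najiLocalComp G v β c b = 1 := by
  rw [localComp_adj_iff_of_not_adj_left hva] at hab hac
  rw [najiLocalComp_of_not_adj hab.ne hva, najiLocalComp_of_not_adj hac.ne hva]
  by_cases hvb : G.Adj v b
  · by_cases hvc : G.Adj v c
    · rw [localComp_adj_iff_of_adj_of_adj hvb hvc hb, not_not] at hbc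
      rw [najiLocalComp_of_adj hb hvb, najiLocalComp_of_adj hb.symm hvc]
      rcases eq_or_ne a v with rfl | hav
      · linear_combination (norm := (ring_nf; reduce_mod_char)) hβ.equation_a hbc
      · linear_combination (norm := (ring_nf; reduce_mod_char))
          hβ.equation_a hbc + hβ.equation_c hab.symm hvb.symm (mt G.adj_symm hva) hav +
          hβ.equation_c hac.symm hvc.symm (mt G.adj_symm hva) hav + hβ.equation_a hab +
          hβ.equation_a hac + hβ.equation_a hvb + hβ.equation_a hvc
    · rw [localComp_adj_iff_of_not_adj_right hvc] at hbc
      rw [najiLocalComp_of_adj hb hvb, najiLocalComp_of_not_adj hb.symm hvc]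
      linear_combination (norm := (ring_nf; reduce_mod_char)) hβ.equation_c hab hac hbc hb
  · have hvc : ¬ G.Adj v c := mt hcb hvb
    rw [localComp_adj_iff_of_not_adj_left hvb] at hbc
    rw [najiLocalComp_of_not_adj hb hvb, najiLocalComp_of_not_adj hb.symm hvc]
    linear_combination
      hβ.equation_c hab hac hbc hb +
      hβ.equation_b hab (mt G.adj_symm hva) (mt G.adj_symm hvb)
        (G.ne_of_adj_of_not_adj hab hvb) (G.ne_of_adj_of_not_adj hab.symm hva) +
      hβ.equation_b hac (mt G.adj_symm hva) (mt G.adj_symm hvc)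
        (G.ne_of_adj_of_not_adj hac hvc) (G.ne_of_adj_of_not_adj hac.symm hva)

theorem localComp_equation_c (hβ : NajiSolution G β) (hab : (localComp G v).Adj a b)
    (hac : (localComp G v).Adj a c) (hbc : ¬ (localComp G v).Adj b c) (hb : b ≠ c) :
    najiLocalComp G v β a b + najiLocalComp G v β a c + najiLocalComp G v β b c +
      najiLocalComp G v β c b = 1 := by
  wlog hcb : G.Adj v c → G.Adj v b generalizing b c
  · linear_combination this hac hab (fun h => hbc h.symm) hb.symm (by tauto)
  by_cases hva : G.Adj v a
  · exact hβ.localComp_equation_c_of_adj hva hcb hab hac hbc hb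
  · exact hβ.localComp_equation_c_of_not_adj hva hcb hab hac hbc hb

theorem localComp (hβ : NajiSolution G β) :
    NajiSolution (localComp G v) (najiLocalComp G v β) :=
  ⟨fun _ => by simp [najiLocalComp], fun _ _ h => hβ.localComp_equation_a h,
    fun _ _ _ _ hac hbc hab hnac hnbc => hβ.localComp_equation_b hab hnac hnbc hac hbc,
    fun _ _ _ _ _ hbc hab hac hnbc => hβ.localComp_equation_c hab hac hnbc hbc⟩

end NajiSolution

theorem exists_najiSolution_localComp_iff (G : SimpleGraph V) (v : V) :
    (∃ β, NajiSolution (localComp G v) β) ↔ ∃ β, NajiSolution G β :=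
  ⟨fun ⟨_, hβ⟩ => localComp_localComp G v ▸ ⟨_, hβ.localComp⟩, fun ⟨_, hβ⟩ => ⟨_, hβ.localComp⟩⟩

end

theorem naji_locally_equivalent_general {V : Type*}
    (G H : SimpleGraph V) (h : LocallyEquivalent G H) :
    (∃ β : V → V → ZMod 2, NajiSolution G β) ↔ (∃ β : V → V → ZMod 2, NajiSolution H β) := by
  induction h with
  | refl => rfl
  | tail _ hstep ih =>
    obtain ⟨v, rfl⟩ := hstep
    exact ih.trans (exists_najiSolution_localComp_iff _ v).symm

/-- Locally equivalent graphs are simultaneously Naji graphs. -/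
theorem naji_locally_equivalent {V : Type*} [Fintype V] [DecidableEq V]
    (G H : SimpleGraph V) (h : LocallyEquivalent G H) :
    (∃ β : V → V → ZMod 2, NajiSolution G β) ↔ (∃ β : V → V → ZMod 2, NajiSolution H β) :=
  naji_locally_equivalent_general G H h
end

section
/- If a connected finite simple graph G has a split (X,Y), then G is a Naji graph if and only if G_X and G_Y are both Naji graphs; moreover 2·|B(G)| ≥ |B(G_X)| · |B(G_Y)|. -/
/-- The composition factor `G_X` of a split: the induced subgraph `G[X]` together with a
new marker vertex (the `none` vertex) whose neighbourhood is exactly `X'`. -/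
def graphWithMarker {V : Type*} [DecidableEq V] (G : SimpleGraph V) (X X' : Finset V) :
    SimpleGraph (Option {x : V // x ∈ X}) where
  Adj a b :=
    match a, b with
    | some x, some y => G.Adj x.val y.val
    | some x, none => x.val ∈ X'
    | none, some y => y.val ∈ X'
    | none, none => False
  symm := ⟨by
    rintro (_ | x) (_ | y) h
    · exact h
    · exact h
    · exact h
    · exact G.adj_symm h⟩
  loopless := ⟨by
    rintro (_ | x) h
    · exact h
    · exact G.irrefl h⟩


namespace NajiSolution

variable {V W : Type*} {G : SimpleGraph V} {H : SimpleGraph W} {β : V → V → ZMod 2}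

theorem comap (hβ : NajiSolution G β) (f : H ↪g G) :
    NajiSolution H fun a b => β (f a) (f b) := by
  obtain ⟨hdiag, hA, hB, hC⟩ := hβ
  refine ⟨fun v => hdiag _, fun v w h => hA _ _ (f.map_adj_iff.2 h), ?_, ?_⟩
  · intro v w x hvw hvx hwx h₁ h₂ h₃
    exact hB _ _ _ (f.injective.ne hvw) (f.injective.ne hvx) (f.injective.ne hwx)
      (f.map_adj_iff.2 h₁) (by rwa [f.map_adj_iff]) (by rwa [f.map_adj_iff])
  · intro v w x hvw hvx hwx h₁ h₂ h₃
    exact hC _ _ _ (f.injective.ne hvw) (f.injective.ne hvx) (f.injective.ne hwx)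
      (f.map_adj_iff.2 h₁) (f.map_adj_iff.2 h₂) (by rwa [f.map_adj_iff])

end NajiSolution

structure IsSplit {V : Type*} (G : SimpleGraph V) (X Y X' Y' : Finset V) : Prop where
  mem_or_mem : ∀ v, v ∈ X ∨ v ∈ Y
  disjoint : Disjoint X Y
  subset_left : X' ⊆ X
  subset_right : Y' ⊆ Y
  adj_iff : ∀ x ∈ X, ∀ y ∈ Y, G.Adj x y ↔ x ∈ X' ∧ y ∈ Y'

namespace IsSplit

variable {V : Type*} {G : SimpleGraph V} {X Y X' Y' : Finset V}

theorem symm (h : IsSplit G X Y X' Y') : IsSplit G Y X Y' X' where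
  mem_or_mem v := (h.mem_or_mem v).symm
  disjoint := h.disjoint.symm
  subset_left := h.subset_right
  subset_right := h.subset_left
  adj_iff y hy x hx := by rw [G.adj_comm, h.adj_iff x hx y hy, and_comm]

theorem notMem_right {v : V} (h : IsSplit G X Y X' Y') (hv : v ∈ X) : v ∉ Y :=
  Finset.disjoint_left.mp h.disjoint hv

theorem mem_right_of_notMem_left {v : V} (h : IsSplit G X Y X' Y') (hv : v ∉ X) : v ∈ Y :=
  (h.mem_or_mem v).resolve_left hv

theorem nonempty_of_connected (h : IsSplit G X Y X' Y') (hG : G.Connected) (hX : X.Nonempty)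
    (hY : Y.Nonempty) : X'.Nonempty ∧ Y'.Nonempty := by
  obtain ⟨x, hx⟩ := hX
  obtain ⟨y, hy⟩ := hY
  obtain ⟨d, -, hd₁, hd₂⟩ := (hG.preconnected x y).some.exists_boundary_dart (X : Set V) hx
    fun hyX => h.notMem_right hyX hy
  obtain ⟨hx', hy'⟩ := (h.adj_iff _ hd₁ _ (h.mem_right_of_notMem_left hd₂)).1 d.adj
  exact ⟨⟨_, hx'⟩, ⟨_, hy'⟩⟩

end IsSplit

section Marker

variable {V : Type*} [DecidableEq V]

@[simp] theorem graphWithMarker_adj_some_some (G : SimpleGraph V) (X X' : Finset V)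
    (a b : {x // x ∈ X}) : (graphWithMarker G X X').Adj (some a) (some b) ↔ G.Adj a b :=
  Iff.rfl

@[simp] theorem graphWithMarker_adj_some_none (G : SimpleGraph V) (X X' : Finset V)
    (a : {x // x ∈ X}) : (graphWithMarker G X X').Adj (some a) none ↔ ↑a ∈ X' :=
  Iff.rfl

@[simp] theorem graphWithMarker_adj_none_some (G : SimpleGraph V) (X X' : Finset V)
    (a : {x // x ∈ X}) : (graphWithMarker G X X').Adj none (some a) ↔ ↑a ∈ X' :=
  Iff.rfl

variable {G : SimpleGraph V} {X Y X' Y' : Finset V}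

def IsSplit.markerEmbedding (h : IsSplit G X Y X' Y') {y : V} (hy : y ∈ Y') :
    graphWithMarker G X X' ↪g G where
  toFun a := a.elim y Subtype.val
  inj' := by
    have hyX : y ∉ X := fun hyX => h.notMem_right hyX (h.subset_right hy)
    rintro (_ | ⟨a, ha⟩) (_ | ⟨b, hb⟩) hab <;> aesop
  map_rel_iff' := by
    have hadj : ∀ a ∈ X, G.Adj a y ↔ a ∈ X' := fun a ha => by
      simp [h.adj_iff a ha y (h.subset_right hy), hy]
    rintro (_ | ⟨a, ha⟩) (_ | ⟨b, hb⟩) <;>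
      simp only [Function.Embedding.coeFn_mk, Option.elim] <;> simp [G.adj_comm y, *]

@[simp] theorem IsSplit.markerEmbedding_none (h : IsSplit G X Y X' Y') {y : V} (hy : y ∈ Y') :
    h.markerEmbedding hy none = y :=
  rfl

@[simp] theorem IsSplit.markerEmbedding_some (h : IsSplit G X Y X' Y') {y : V} (hy : y ∈ Y')
    (a : {x // x ∈ X}) : h.markerEmbedding hy (some a) = a :=
  rfl

end Marker

open Classical in
noncomputable def vertexSwitch {W : Type*} (H : SimpleGraph W) (m : W) (u v : W) : ZMod 2 :=
  if u = m then (if v = m then 0 else 1) else if v = m ∧ H.Adj u m then 1 else 0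

section Glue

variable {V : Type*} [DecidableEq V]

def collapseOutside (X : Finset V) (v : V) : Option {x // x ∈ X} :=
  if hv : v ∈ X then some ⟨v, hv⟩ else none

@[simp] theorem collapseOutside_of_mem {X : Finset V} {v : V} (hv : v ∈ X) :
    collapseOutside X v = some ⟨v, hv⟩ :=
  dif_pos hv

@[simp] theorem collapseOutside_of_notMem {X : Finset V} {v : V} (hv : v ∉ X) :
    collapseOutside X v = none :=
  dif_neg hv

variable {X Y X' Y' : Finset V} (bX : Option {x // x ∈ X} → Option {x // x ∈ X} → ZMod 2)
  (bY : Option {y // y ∈ Y} → Option {y // y ∈ Y} → ZMod 2)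

def glueRow (X' : Finset V) (c : ZMod 2) (v w : V) : ZMod 2 :=
  bX (collapseOutside X v) (collapseOutside X w) +
    if v ∈ X' ∧ w ∈ Y then bY none (collapseOutside Y w) + c else 0

def glue (X' Y' : Finset V) (c : ZMod 2) (v w : V) : ZMod 2 :=
  if v ∈ X then glueRow bX bY X' c v w else glueRow bY bX Y' (c + 1) v w

variable {bX bY} {G : SimpleGraph V}

theorem IsSplit.glue_comm (h : IsSplit G X Y X' Y') (c : ZMod 2) :
    glue bX bY X' Y' c = glue bY bX Y' X' (c + 1) := by
  ext v w
  by_cases hv : v ∈ X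
  · have hc : c + 1 + 1 = c := by grind
    simp [glue, hv, h.notMem_right hv, hc]
  · simp [glue, hv, h.mem_right_of_notMem_left hv]

theorem IsSplit.glue_self (h : IsSplit G X Y X' Y')
    (hX : NajiSolution (graphWithMarker G X X') bX) (c : ZMod 2) {v : V} (hv : v ∈ X) :
    glue bX bY X' Y' c v v = 0 := by
  simp [glue, glueRow, hv, h.notMem_right hv, hX.1]

namespace IsSplit

variable (h : IsSplit G X Y X' Y') (hX : NajiSolution (graphWithMarker G X X') bX)
  (hY : NajiSolution (graphWithMarker G Y Y') bY) (c : ZMod 2)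
include h hX hY

theorem glue_add_glue_of_adj {v w : V} (hv : v ∈ X) (hvw : G.Adj v w) :
    glue bX bY X' Y' c v w + glue bX bY X' Y' c w v = 1 := by
  obtain ⟨-, hXa, -, -⟩ := hX
  obtain ⟨-, hYa, -, -⟩ := hY
  rcases h.mem_or_mem w with hw | hw
  · simpa [glue, glueRow, hv, hw, h.notMem_right hv, h.notMem_right hw]
      using hXa (some ⟨v, hv⟩) (some ⟨w, hw⟩) hvw
  · obtain ⟨hv', hw'⟩ := (h.adj_iff v hv w hw).1 hvw
    have := hXa (some ⟨v, hv⟩) none hv'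
    have := hYa (some ⟨w, hw⟩) none hw'
    simp [glue, glueRow, hv, hw, hv', hw', h.notMem_right hv, h.symm.notMem_right hw]
    grind

theorem glue_add_glue_of_not_adj {v w z : V} (hz : z ∈ X) (hvw : v ≠ w) (hvz : v ≠ z)
    (hwz : w ≠ z) (hadj : G.Adj v w) (hnvz : ¬G.Adj v z) (hnwz : ¬G.Adj w z) :
    glue bX bY X' Y' c z v + glue bX bY X' Y' c z w = 0 := by
  wlog hvw' : v ∈ X ∨ w ∈ Y generalizing v w
  · rw [add_comm]
    exact this hvw.symm hwz hvz hadj.symm hnwz hnvz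
      (.inr (h.mem_right_of_notMem_left (not_or.1 hvw').1))
  obtain ⟨-, -, hXb, -⟩ := hX
  obtain ⟨-, -, hYb, -⟩ := hY
  have hzY := h.notMem_right hz
  rcases h.mem_or_mem v with hv | hv <;> rcases h.mem_or_mem w with hw | hw
  · have := hXb (some ⟨v, hv⟩) (some ⟨w, hw⟩) (some ⟨z, hz⟩) (by simpa) (by simpa) (by simpa)
      hadj hnvz hnwz
    simpa [glue, glueRow, hz, hv, hw, hzY, h.notMem_right hv, h.notMem_right hw]
  · obtain ⟨hv', hw'⟩ := (h.adj_iff v hv w hw).1 hadj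
    have hz' : z ∉ X' := fun hz' => hnwz ((h.symm.adj_iff w hw z hz).2 ⟨hw', hz'⟩)
    have := hXb (some ⟨v, hv⟩) none (some ⟨z, hz⟩) (by simp) (by simpa) (by simp) hv' hnvz hz'
    simpa [glue, glueRow, hz, hv, hw, hzY, hz', h.notMem_right hv, h.symm.notMem_right hw]
  · exact absurd hvw' (by simp [h.notMem_right hw, h.symm.notMem_right hv])
  · have hvX := h.symm.notMem_right hv
    have hwX := h.symm.notMem_right hw
    by_cases hz' : z ∈ X'
    · have hv' : v ∉ Y' := fun hv' => hnvz ((h.symm.adj_iff v hv z hz).2 ⟨hv', hz'⟩)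
      have hw' : w ∉ Y' := fun hw' => hnwz ((h.symm.adj_iff w hw z hz).2 ⟨hw', hz'⟩)
      have := hYb (some ⟨v, hv⟩) (some ⟨w, hw⟩) none (by simpa) (by simp) (by simp) hadj hv' hw'
      simp [glue, glueRow, hz, hv, hw, hz', hvX, hwX]
      grind
    · simp [glue, glueRow, hz, hv, hw, hz', hvX, hwX, CharTwo.add_self_eq_zero]

theorem glue_cherry {v w z : V} (hv : v ∈ X) (hvw : v ≠ w) (hvz : v ≠ z) (hwz : w ≠ z)
    (hadjw : G.Adj v w) (hadjz : G.Adj v z) (hnwz : ¬G.Adj w z) :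
    glue bX bY X' Y' c v w + glue bX bY X' Y' c v z + glue bX bY X' Y' c w z +
      glue bX bY X' Y' c z w = 1 := by
  wlog hwz' : w ∈ X ∨ z ∈ Y generalizing w z
  · have := this hvz hvw hwz.symm hadjz hadjw (fun h' => hnwz h'.symm)
      (.inr (h.mem_right_of_notMem_left (not_or.1 hwz').1))
    grind
  obtain ⟨-, hXa, -, hXc⟩ := hX
  obtain ⟨-, hYa, -, hYc⟩ := hY
  have hvY := h.notMem_right hv
  rcases h.mem_or_mem w with hw | hw <;> rcases h.mem_or_mem z with hz | hz
  · have := hXc (some ⟨v, hv⟩) (some ⟨w, hw⟩) (some ⟨z, hz⟩) (by simpa) (by simpa) (by simpa)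
      hadjw hadjz hnwz
    simpa [glue, glueRow, hz, hv, hw, hvY, h.notMem_right hz, h.notMem_right hw]
  · obtain ⟨hv', hz'⟩ := (h.adj_iff v hv z hz).1 hadjz
    have hw' : w ∉ X' := fun hw' => hnwz ((h.adj_iff w hw z hz).2 ⟨hw', hz'⟩)
    have := hXc (some ⟨v, hv⟩) (some ⟨w, hw⟩) none (by simpa) (by simp) (by simp) hadjw hv' hw'
    have := hYa (some ⟨z, hz⟩) none hz'
    simp [glue, glueRow, hz, hv, hw, hv', hw', hz', h.notMem_right hw, h.symm.notMem_right hz]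
    grind
  · exact absurd hwz' (by simp [h.notMem_right hz, h.symm.notMem_right hw])
  · obtain ⟨hv', hw'⟩ := (h.adj_iff v hv w hw).1 hadjw
    obtain ⟨-, hz'⟩ := (h.adj_iff v hv z hz).1 hadjz
    have := hYc none (some ⟨w, hw⟩) (some ⟨z, hz⟩) (by simp) (by simp) (by simpa) hw' hz' hnwz
    simp [glue, glueRow, hz, hv, hw, hv', h.symm.notMem_right hw, h.symm.notMem_right hz]
    grind

theorem najiSolution_glue : NajiSolution G (glue bX bY X' Y' c) := by
  refine ⟨fun v => ?_, fun v w hvw => ?_, fun v w z hvw hvz hwz hadj hnvz hnwz => ?_,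
    fun v w z hvw hvz hwz hadjw hadjz hnwz => ?_⟩
  · rcases h.mem_or_mem v with hv | hv
    · exact h.glue_self hX c hv
    · rw [h.glue_comm]
      exact h.symm.glue_self hY _ hv
  · rcases h.mem_or_mem v with hv | hv
    · exact h.glue_add_glue_of_adj hX hY c hv hvw
    · rw [h.glue_comm]
      exact h.symm.glue_add_glue_of_adj hY hX _ hv hvw
  · rcases h.mem_or_mem z with hz | hz
    · exact h.glue_add_glue_of_not_adj hX hY c hz hvw hvz hwz hadj hnvz hnwz
    · rw [h.glue_comm]
      exact h.symm.glue_add_glue_of_not_adj hY hX _ hz hvw hvz hwz hadj hnvz hnwz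
  · rcases h.mem_or_mem v with hv | hv
    · exact h.glue_cherry hX hY c hv hvw hvz hwz hadjw hadjz hnwz
    · rw [h.glue_comm]
      exact h.symm.glue_cherry hY hX _ hv hvw hvz hwz hadjw hadjz hnwz

theorem glue_comp_markerEmbedding {y : V} (hy : y ∈ Y') :
    (fun a b => glue bX bY X' Y' c (h.markerEmbedding hy a) (h.markerEmbedding hy b)) =
      bX + (c + bY none (some ⟨y, h.subset_right hy⟩)) •
        vertexSwitch (graphWithMarker G X X') none := by
  have hyY := h.subset_right hy
  have hyX := h.symm.notMem_right hyY
  have hya := hY.2.1 (some ⟨y, hyY⟩) none hy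
  ext (_ | ⟨a, ha⟩) (_ | ⟨b, hb⟩)
  · simp [glue, glueRow, vertexSwitch, hyX, hX.1, hY.1]
  · simp [glue, glueRow, vertexSwitch, hyX, hyY, hy, hb, h.notMem_right hb]
    grind
  · simp [glue, glueRow, vertexSwitch, hyX, hyY, ha, add_comm]
  · simp [glue, glueRow, vertexSwitch, ha, hb, h.notMem_right hb]

end IsSplit

theorem IsSplit.eq_of_glue_eq (h : IsSplit G X Y X' Y') {x y : V} (hx : x ∈ X') (hy : y ∈ Y')
    {bX₁ bX₂ : Option {x // x ∈ X} → Option {x // x ∈ X} → ZMod 2}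
    {bY₁ bY₂ : Option {y // y ∈ Y} → Option {y // y ∈ Y} → ZMod 2}
    (hX₁ : NajiSolution (graphWithMarker G X X') bX₁)
    (hX₂ : NajiSolution (graphWithMarker G X X') bX₂)
    (hY₁ : NajiSolution (graphWithMarker G Y Y') bY₁)
    (hY₂ : NajiSolution (graphWithMarker G Y Y') bY₂)
    {c : ZMod 2} (hglue : glue bX₁ bY₁ X' Y' c = glue bX₂ bY₂ X' Y' c)
    (hmark : bY₁ none (some ⟨y, h.subset_right hy⟩) = bY₂ none (some ⟨y, h.subset_right hy⟩)) :
    bX₁ = bX₂ ∧ bY₁ = bY₂ := by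
  have hbX : bX₁ = bX₂ := by
    have := h.glue_comp_markerEmbedding hX₁ hY₁ c hy
    rw [hglue, h.glue_comp_markerEmbedding hX₂ hY₂ c hy, hmark] at this
    exact (add_right_cancel this).symm
  refine ⟨hbX, ?_⟩
  have := h.symm.glue_comp_markerEmbedding hY₁ hX₁ (c + 1) hx
  rw [← h.glue_comm, hglue, h.glue_comm, h.symm.glue_comp_markerEmbedding hY₂ hX₂ _ hx,
    hbX] at this
  exact (add_right_cancel this).symm

theorem IsSplit.card_mul_card_le [Finite V] (h : IsSplit G X Y X' Y') (hX' : X'.Nonempty)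
    (hY' : Y'.Nonempty) :
    Nat.card {b // NajiSolution (graphWithMarker G X X') b} *
        Nat.card {b // NajiSolution (graphWithMarker G Y Y') b} ≤
      2 * Nat.card {β // NajiSolution G β} := by
  obtain ⟨x, hx⟩ := hX'
  obtain ⟨y, hy⟩ := hY'
  let F (p : {b // NajiSolution (graphWithMarker G X X') b} ×
      {b // NajiSolution (graphWithMarker G Y Y') b}) : {β // NajiSolution G β} × ZMod 2 :=
    (⟨glue p.1.1 p.2.1 X' Y' 0, h.najiSolution_glue p.1.2 p.2.2 0⟩,
      p.2.1 none (some ⟨y, h.subset_right hy⟩))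
  have hF : F.Injective := by
    rintro ⟨⟨bX₁, hX₁⟩, ⟨bY₁, hY₁⟩⟩ ⟨⟨bX₂, hX₂⟩, ⟨bY₂, hY₂⟩⟩ heq
    simp only [F, Prod.mk.injEq, Subtype.mk.injEq] at heq
    obtain ⟨rfl, rfl⟩ := h.eq_of_glue_eq hx hy hX₁ hX₂ hY₁ hY₂ heq.1 heq.2
    rfl
  simpa [Nat.card_prod, mul_comm] using Nat.card_le_card_of_injective F hF

end Glue

/-- If a connected graph `G` has a split `(X, Y)` (with cross edges exactly those joining
`X' ⊆ X` to `Y' ⊆ Y`), then `G` is a Naji graph iff both composition factors `G_X` and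
`G_Y` are; moreover `|B(G)| ≥ |B(G_X)| · |B(G_Y)| / 2`. -/
theorem naji_split {V : Type*} [Fintype V] [DecidableEq V]
    (G : SimpleGraph V) (hconn : G.Connected) (X Y X' Y' : Finset V)
    (hpart : ∀ v : V, v ∈ X ∨ v ∈ Y) (hdisj : Disjoint X Y)
    (hX : 2 ≤ X.card) (hY : 2 ≤ Y.card) (hX' : X' ⊆ X) (hY' : Y' ⊆ Y)
    (hedge : ∀ x ∈ X, ∀ y ∈ Y, (G.Adj x y ↔ x ∈ X' ∧ y ∈ Y')) :
    ((∃ β : V → V → ZMod 2, NajiSolution G β) ↔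
      ((∃ β, NajiSolution (graphWithMarker G X X') β) ∧
       (∃ β, NajiSolution (graphWithMarker G Y Y') β))) ∧
    Nat.card {β // NajiSolution (graphWithMarker G X X') β} *
        Nat.card {β // NajiSolution (graphWithMarker G Y Y') β} ≤
      2 * Nat.card {β : V → V → ZMod 2 // NajiSolution G β} := by
  have h : IsSplit G X Y X' Y' := ⟨hpart, hdisj, hX', hY', hedge⟩
  obtain ⟨⟨x, hx⟩, ⟨y, hy⟩⟩ := h.nonempty_of_connected hconn (Finset.card_pos.1 (by omega))
    (Finset.card_pos.1 (by omega))
  refine ⟨⟨fun ⟨β, hβ⟩ => ?_, fun ⟨⟨bX, hbX⟩, ⟨bY, hbY⟩⟩ => ⟨_, h.najiSolution_glue hbX hbY 0⟩⟩,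
    h.card_mul_card_le ⟨x, hx⟩ ⟨y, hy⟩⟩
  exact ⟨⟨_, hβ.comap (h.markerEmbedding hy)⟩, ⟨_, hβ.comap (h.symm.markerEmbedding hx)⟩⟩
end

section
/- Let G be a Naji graph with an edge e = vw, and suppose β is simultaneously a Naji solution of G and of the edge-deleted graph G−e. Then β(x,v) ≠ β(x,w) for every vertex x ∈ (N_G(v) Δ N_G(w)) ∖ {v,w}, and β(x,v) = β(x,w) for every vertex x ∉ N_G(v) Δ N_G(w), where N_G denotes open neighbourhood in G and Δ denotes symmetric difference of sets. -/
/-- If `β` is simultaneously a Naji solution of `G` and of `G − e` where `e = vw` is an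
edge of `G`, then `β(x,v) ≠ β(x,w)` for `x ∈ (N(v) Δ N(w)) \ {v,w}` and
`β(x,v) = β(x,w)` for `x ∉ N(v) Δ N(w)`. -/
theorem naji_shared_solution_edge_deleted {V : Type*} [Fintype V] [DecidableEq V]
    (G : SimpleGraph V) (v w : V) (hvw : G.Adj v w) (β : V → V → ZMod 2)
    (hG : NajiSolution G β) (hGe : NajiSolution (G.deleteEdges {s(v, w)}) β) :
    ∀ x : V,
      (x ≠ v → x ≠ w → x ∈ symmDiff (G.neighborSet v) (G.neighborSet w) →
        β x v ≠ β x w) ∧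
      (x ∉ symmDiff (G.neighborSet v) (G.neighborSet w) → β x v = β x w) := by
  obtain ⟨h0, ha, hb, hc⟩ := hG
  obtain ⟨h0', ha', hb', hc'⟩ := hGe
  have hne : v ≠ w := hvw.ne
  have neq1 : ∀ a b : ZMod 2, a + b = 1 → a ≠ b := by decide
  have eq0 : ∀ a b : ZMod 2, a + b = 0 → a = b := by decide
  have two : (2 : ZMod 2) = 0 := rfl
  have hA : ∀ a b : V, (G.deleteEdges {s(v,w)}).Adj a b ↔
      G.Adj a b ∧ ¬(a = v ∧ b = w) ∧ ¬(a = w ∧ b = v) := by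
    intro a b
    simp [SimpleGraph.deleteEdges_adj, Sym2.eq_iff]
  intro x
  constructor
  · intro hxv hxw hx
    rw [Set.mem_symmDiff] at hx
    simp only [SimpleGraph.mem_neighborSet] at hx
    apply neq1
    rcases hx with ⟨hvx, hwx⟩ | ⟨hwx, hvx⟩
    · -- x ∈ N(v), x ∉ N(w)
      have e1 := hc v w x hne (Ne.symm hxv) (Ne.symm hxw) hvw hvx
        (fun h => hwx h)
      have e2 := hb' v x w (Ne.symm hxv) hne hxw
        ((hA v x).2 ⟨hvx, fun h => hxw h.2, fun h => hne h.1⟩)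
        (fun h => (((hA v w).1 h).2.1) ⟨rfl, rfl⟩)
        (fun h => hwx (((hA x w).1 h).1.symm))
      have e3 := ha v x hvx
      have e4 := ha v w hvw
      linear_combination e1 + e2 + e3 + e4 - (β v w + β v x + β w x + β w v) * two + two
    · -- x ∈ N(w), x ∉ N(v)
      have e1 := hc w v x (Ne.symm hne) (Ne.symm hxw) (Ne.symm hxv) hvw.symm hwx
        (fun h => hvx h)
      have e2 := hb' w x v (Ne.symm hxw) (Ne.symm hne) hxv
        ((hA w x).2 ⟨hwx, fun h => hne h.1.symm, fun h => hxv h.2⟩)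
        (fun h => (((hA w v).1 h).2.2) ⟨rfl, rfl⟩)
        (fun h => hvx (((hA x v).1 h).1.symm))
      have e3 := ha w x hwx
      have e4 := ha v w hvw
      linear_combination e1 + e2 + e3 + e4 - (β w v + β w x + β v x + β v w) * two + two
  · intro hx
    rw [Set.mem_symmDiff] at hx
    push_neg at hx
    simp only [SimpleGraph.mem_neighborSet] at hx
    by_cases hxv : x = v
    · exact absurd (hx.2 (hxv ▸ hvw.symm)) (by simp [hxv, G.irrefl])
    by_cases hxw : x = w
    · exact absurd (hx.1 (hxw ▸ hvw)) (by simp [hxw, G.irrefl])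
    by_cases hvx : G.Adj v x
    · -- adjacent to both
      have hwx : G.Adj w x := hx.1 hvx
      have e1 := hc' x v w hxv hxw hne
        ((hA x v).2 ⟨hvx.symm, fun h => hxv h.1, fun h => hxw h.1⟩)
        ((hA x w).2 ⟨hwx.symm, fun h => hxv h.1, fun h => hxw h.1⟩)
        (fun h => (((hA v w).1 h).2.1) ⟨rfl, rfl⟩)
      have e2 := ha v w hvw
      apply eq0
      linear_combination e1 + e2 - (β v w + β w v) * two + two
    · -- adjacent to neither
      have hwx : ¬ G.Adj w x := fun h => hvx (hx.2 h)
      exact eq0 _ _ (hb v w x hne (fun h => hxv h.symm) (fun h => hxw h.symm) hvw hvx hwx)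
end

section
/- A finite simple graph G is a permutation graph if and only if the following system of equations over GF(2), in variables β(v,w) indexed by ordered pairs of distinct vertices, has a solution: (a) β(v,w)+β(w,v)=1 for all distinct vertices v,w; (b) for all distinct vertices v,w,x with vw,vx ∉ E(G) and wx ∈ E(G), β(v,w)+β(v,x)=0; (c) for all distinct vertices v,w,x with vw,vx ∈ E(G) and wx ∉ E(G), β(v,w)+β(v,x)=0. -/
/-!
Read `β v w = 1` as orienting the pair `v w` from `v` to `w`. Condition (a) says that this is a
tournament, and (c), resp. (b), that on the edges of `G`, resp. of `Gᶜ`, it respects Gallai's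
forcing: two edges `v w`, `v x` with `w x` a non-edge are oriented alike at `v`.

A permutation graph is the graph of the pairs on which two linear orders disagree, and the first
of them is a solution. Conversely, such a pair of orders is built along the modular decomposition.
If `G` has a nontrivial module `M`, realize `G[M]` and the graph in which `M` is collapsed to one
of its vertices, and substitute lexicographically. If `G` is prime, a solution has no cyclic
triple: one with both edges and non-edges contradicts (b) or (c), so it is a triangle of `G`
or of `Gᶜ`, say `a → b → c → a` in `G`. Moving `b c` through its implication class keeps `a` the
apex of a cyclic triangle, so `a` is not covered by the class; but the vertices covered by an
implication class form a module, hence all of `V`. So a solution of a prime graph is a linear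
order, and reversing it on the edges of `G` gives the second one.
-/

/-- The permutation graph of a permutation `π` of `{0, …, n-1}`: `i` and `j` are adjacent
iff `i < j` and `π i > π j` (as an unordered condition). -/
def permutationGraph {n : ℕ} (π : Equiv.Perm (Fin n)) : SimpleGraph (Fin n) where
  Adj i j := (i < j ∧ π j < π i) ∨ (j < i ∧ π i < π j)
  symm := ⟨fun _ _ h => Or.symm h⟩
  loopless := ⟨fun i h => by
    rcases h with ⟨h, _⟩ | ⟨h, _⟩ <;> exact lt_irrefl i h⟩

/-- `G` is a permutation graph: isomorphic to the graph of some permutation. -/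
def IsPermutationGraph {V : Type*} (G : SimpleGraph V) : Prop :=
  ∃ (n : ℕ) (π : Equiv.Perm (Fin n)), Nonempty (G ≃g permutationGraph π)

open Relation

structure IsTournament {V : Type*} (r : V → V → Prop) : Prop where
  asymm : ∀ ⦃v w⦄, r v w → ¬ r w v
  total : ∀ ⦃v w⦄, v ≠ w → r v w ∨ r w v

structure IsTransitiveTournament {V : Type*} (r : V → V → Prop) : Prop
    extends IsTournament r where
  trans : ∀ ⦃u v w⦄, r u v → r v w → r u w

namespace IsTournament

variable {V : Type*} {r : V → V → Prop}

lemma irrefl (h : IsTournament r) (v : V) : ¬ r v v := fun hv => h.asymm hv hv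

lemma ne (h : IsTournament r) {v w : V} (hvw : r v w) : v ≠ w := by
  rintro rfl
  exact h.irrefl v hvw

lemma not_iff (h : IsTournament r) {v w : V} (hvw : v ≠ w) : ¬ r v w ↔ r w v :=
  ⟨(h.total hvw).resolve_left, fun hwv => h.asymm hwv⟩

lemma isTransitiveTournament (h : IsTournament r)
    (hcyc : ∀ ⦃a b c⦄, r a b → r b c → r c a → False) : IsTransitiveTournament r where
  toIsTournament := h
  trans a b c hab hbc := by
    have hac : a ≠ c := by
      rintro rfl
      exact h.asymm hab hbc
    exact (h.total hac).resolve_right (hcyc hab hbc)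

end IsTournament

lemma isTransitiveTournament_lt_comp {V α : Type*} [LinearOrder α] {f : V → α}
    (hf : Function.Injective f) : IsTransitiveTournament (fun u v => f u < f v) where
  asymm _ _ := lt_asymm
  total _ _ huv := lt_or_gt_of_ne (hf.ne huv)
  trans _ _ _ := lt_trans

lemma IsTransitiveTournament.exists_equiv_fin {V : Type*} [Fintype V] {r : V → V → Prop}
    (h : IsTransitiveTournament r) :
    ∃ e : V ≃ Fin (Fintype.card V), ∀ u v, r u v ↔ e u < e v := by
  classical
  have : IsStrictTotalOrder V r :=
    { trichotomous u v huv hvu := by_contra fun hne => (h.total hne).elim huv hvu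
      irrefl := h.irrefl
      trans _ _ _ := @h.trans _ _ _ }
  let := linearOrderOfSTO r
  exact ⟨(Fintype.orderIsoFinOfCardEq V rfl).symm.toEquiv,
    fun _ _ => (Fintype.orderIsoFinOfCardEq V rfl).symm.lt_iff_lt.symm⟩

namespace SimpleGraph

variable {V : Type*} {G : SimpleGraph V} {r : V → V → Prop}

def RespectsForcing (G : SimpleGraph V) (r : V → V → Prop) : Prop :=
  ∀ ⦃v w x⦄, G.Adj v w → G.Adj v x → ¬ G.Adj w x → (r v w ↔ r v x)

lemma RespectsForcing.comap {W : Type*} {H : SimpleGraph W} (f : H ↪g G)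
    (h : G.RespectsForcing r) : H.RespectsForcing (fun a b => r (f a) (f b)) :=
  fun _ _ _ hvw hvx hwx => h (f.map_adj_iff.2 hvw) (f.map_adj_iff.2 hvx) (mt f.map_adj_iff.1 hwx)

structure IsCompatibleTournament (G : SimpleGraph V) (r : V → V → Prop) : Prop
    extends IsTournament r where
  respectsForcing : G.RespectsForcing r
  respectsForcing_compl : Gᶜ.RespectsForcing r

namespace IsCompatibleTournament

lemma compl (h : G.IsCompatibleTournament r) : Gᶜ.IsCompatibleTournament r where
  toIsTournament := h.toIsTournament
  respectsForcing := h.respectsForcing_compl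
  respectsForcing_compl := by simpa using h.respectsForcing

lemma comap {W : Type*} {H : SimpleGraph W} (f : H ↪g G) (h : G.IsCompatibleTournament r) :
    H.IsCompatibleTournament (fun a b => r (f a) (f b)) where
  asymm _ _ hab := h.asymm hab
  total _ _ hab := h.total (f.injective.ne hab)
  respectsForcing := h.respectsForcing.comap f
  respectsForcing_compl := h.respectsForcing_compl.comap (Embedding.complEquiv f)

end IsCompatibleTournament

open scoped Classical in
def reverseOn (G : SimpleGraph V) (r : V → V → Prop) (v w : V) : Prop :=
  if G.Adj v w then r w v else r v w

lemma reverseOn_of_adj {v w : V} (h : G.Adj v w) : G.reverseOn r v w ↔ r w v := by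
  simp [reverseOn, h]

lemma reverseOn_of_not_adj {v w : V} (h : ¬ G.Adj v w) : G.reverseOn r v w ↔ r v w := by
  simp [reverseOn, h]

lemma IsCompatibleTournament.reverseOn (h : G.IsCompatibleTournament r) :
    G.IsCompatibleTournament (G.reverseOn r) where
  asymm v w := by
    by_cases hvw : G.Adj v w
    · rw [reverseOn_of_adj hvw, reverseOn_of_adj hvw.symm]
      exact fun hwv => h.asymm hwv
    · rw [reverseOn_of_not_adj hvw, reverseOn_of_not_adj (mt G.adj_symm hvw)]
      exact fun hvw => h.asymm hvw
  total v w hne := by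
    by_cases hvw : G.Adj v w
    · rw [reverseOn_of_adj hvw, reverseOn_of_adj hvw.symm]
      exact (h.total hne).symm
    · rw [reverseOn_of_not_adj hvw, reverseOn_of_not_adj (mt G.adj_symm hvw)]
      exact h.total hne
  respectsForcing v w x hvw hvx hwx := by
    rw [reverseOn_of_adj hvw, reverseOn_of_adj hvx, ← h.not_iff hvw.ne, ← h.not_iff hvx.ne,
      h.respectsForcing hvw hvx hwx]
  respectsForcing_compl v w x hvw hvx := by
    rw [reverseOn_of_not_adj ((G.compl_adj v w).1 hvw).2,
      reverseOn_of_not_adj ((G.compl_adj v x).1 hvx).2]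
    exact h.respectsForcing_compl hvw hvx

/-- Gallai's relation `Γ` on oriented edges; its classes under `ReflTransGen` are the
implication classes. -/
inductive Forces (G : SimpleGraph V) : V × V → V × V → Prop
  | sameTail {a b b' : V} : G.Adj a b → G.Adj a b' → ¬ G.Adj b b' → G.Forces (a, b) (a, b')
  | sameHead {a a' b : V} : G.Adj a b → G.Adj a' b → ¬ G.Adj a a' → G.Forces (a, b) (a', b)

lemma Forces.adj {e f : V × V} (h : G.Forces e f) : G.Adj f.1 f.2 := by
  cases h with
  | sameTail _ h _ => exact h
  | sameHead _ h _ => exact h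

lemma adj_of_reflTransGen_forces {e f : V × V} (h : ReflTransGen G.Forces e f)
    (he : G.Adj e.1 e.2) : G.Adj f.1 f.2 := by
  cases h.cases_tail with
  | inl h => exact h ▸ he
  | inr h => obtain ⟨_, -, h⟩ := h; exact h.adj

def implicationClassSupport (G : SimpleGraph V) (e : V × V) : Set V :=
  {z | ∃ f, ReflTransGen G.Forces e f ∧ (z = f.1 ∨ z = f.2)}

def IsModule (G : SimpleGraph V) (M : Set V) : Prop :=
  ∀ ⦃z⦄, z ∉ M → ∀ ⦃u⦄, u ∈ M → ∀ ⦃w⦄, w ∈ M → (G.Adj z u ↔ G.Adj z w)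

def IsPrime (G : SimpleGraph V) : Prop :=
  ∀ ⦃M : Set V⦄, G.IsModule M → M.Nontrivial → M = Set.univ

lemma IsModule.compl {M : Set V} (h : G.IsModule M) : Gᶜ.IsModule M := by
  intro z hz u hu w hw
  rw [compl_adj, compl_adj, h hz hu hw]
  exact and_congr_left fun _ =>
    iff_of_true (ne_of_mem_of_not_mem hu hz).symm (ne_of_mem_of_not_mem hw hz).symm

lemma IsPrime.compl (h : G.IsPrime) : Gᶜ.IsPrime :=
  fun M hM hM' => h (by simpa using hM.compl) hM'

section ImplicationClass

variable {e : V × V} {z : V}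

lemma adj_fst_iff_adj_snd_of_notMem (he : G.Adj e.1 e.2) (hz : z ∉ G.implicationClassSupport e)
    {f : V × V} (hf : ReflTransGen G.Forces e f) : G.Adj z f.1 ↔ G.Adj z f.2 := by
  have hadj := adj_of_reflTransGen_forces hf he
  constructor
  · refine fun h1 => by_contra fun h2 => hz ⟨(f.1, z), hf.tail ?_, Or.inr rfl⟩
    exact .sameTail hadj h1.symm (mt G.adj_symm h2)
  · refine fun h2 => by_contra fun h1 => hz ⟨(z, f.2), hf.tail ?_, Or.inl rfl⟩
    exact .sameHead hadj h2 (mt G.adj_symm h1)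

lemma adj_fst_iff_of_notMem (he : G.Adj e.1 e.2) (hz : z ∉ G.implicationClassSupport e)
    {f : V × V} (hf : ReflTransGen G.Forces e f) : G.Adj z f.1 ↔ G.Adj z e.1 := by
  induction hf with
  | refl => rfl
  | @tail f g hef hfg ih =>
    cases hfg with
    | sameTail => exact ih
    | sameHead =>
      rw [adj_fst_iff_adj_snd_of_notMem he hz (hef.tail (.sameHead ‹_› ‹_› ‹_›)), ← ih,
        adj_fst_iff_adj_snd_of_notMem he hz hef]

lemma isModule_implicationClassSupport (he : G.Adj e.1 e.2) :
    G.IsModule (G.implicationClassSupport e) := by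
  have key : ∀ z ∉ G.implicationClassSupport e, ∀ u ∈ G.implicationClassSupport e,
      G.Adj z u ↔ G.Adj z e.1 := by
    rintro z hz u ⟨f, hf, rfl | rfl⟩
    · exact adj_fst_iff_of_notMem he hz hf
    · rw [← adj_fst_iff_adj_snd_of_notMem he hz hf, adj_fst_iff_of_notMem he hz hf]
  intro z hz u hu w hw
  rw [key z hz u hu, key z hz w hw]

lemma implicationClassSupport_nontrivial (he : G.Adj e.1 e.2) :
    (G.implicationClassSupport e).Nontrivial :=
  ⟨e.1, ⟨e, .refl, Or.inl rfl⟩, e.2, ⟨e, .refl, Or.inr rfl⟩, he.ne⟩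

end ImplicationClass

def IsCyclicTriangle (G : SimpleGraph V) (r : V → V → Prop) (a b c : V) : Prop :=
  G.Adj a b ∧ G.Adj b c ∧ G.Adj c a ∧ r a b ∧ r b c ∧ r c a

lemma IsCyclicTriangle.of_forces (hr : IsTournament r) (hf : G.RespectsForcing r) {a : V}
    {e f : V × V} (hef : G.Forces e f) (h : G.IsCyclicTriangle r a e.1 e.2) :
    G.IsCyclicTriangle r a f.1 f.2 := by
  obtain ⟨hab, hbc, hca, rab, rbc, rca⟩ := h
  cases hef with
  | @sameTail b c c' _ hbc' hcc' =>
    have rbc' : r b c' := (hf hbc hbc' hcc').1 rbc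
    have hac' : G.Adj a c' := by
      by_contra hac'
      exact hr.asymm rab ((hf hab.symm hbc' hac').2 rbc')
    refine ⟨hab, hbc', hac'.symm, rab, rbc', (hr.not_iff hac'.ne).1 fun rac' => ?_⟩
    exact hr.asymm rca ((hf hca.symm hac' hcc').2 rac')
  | @sameHead b b' c _ hb'c hbb' =>
    have rb'c : r b' c := (hr.not_iff hb'c.symm.ne).1 fun rcb' =>
      hr.asymm rbc ((hf hbc.symm hb'c.symm hbb').2 rcb')
    have hab' : G.Adj a b' := by
      by_contra hab'
      exact hr.asymm rb'c ((hf hca hb'c.symm hab').1 rca)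
    exact ⟨hab', hb'c, hca, (hf hab hab' hbb').1 rab, rb'c, rca⟩

lemma IsCyclicTriangle.of_reflTransGen_forces (hr : IsTournament r) (hf : G.RespectsForcing r)
    {a : V} {e f : V × V} (hef : ReflTransGen G.Forces e f) (h : G.IsCyclicTriangle r a e.1 e.2) :
    G.IsCyclicTriangle r a f.1 f.2 := by
  induction hef with
  | refl => exact h
  | tail _ hfg ih => exact ih.of_forces hr hf hfg

lemma IsPrime.not_isCyclicTriangle (hG : G.IsPrime) (hr : IsTournament r)
    (hf : G.RespectsForcing r) {a b c : V} : ¬ G.IsCyclicTriangle r a b c := by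
  intro h
  have hbc : G.Adj (b, c).1 (b, c).2 := h.2.1
  have ha : a ∈ G.implicationClassSupport (b, c) := by
    rw [hG (isModule_implicationClassSupport hbc) (implicationClassSupport_nontrivial hbc)]
    trivial
  obtain ⟨f, hf', rfl | rfl⟩ := ha
  · exact (h.of_reflTransGen_forces hr hf hf').1.ne rfl
  · exact (h.of_reflTransGen_forces hr hf hf').2.2.1.ne rfl

lemma IsPrime.not_cycle_of_adj_of_adj (hG : G.IsPrime) (hr : IsTournament r)
    (hf : G.RespectsForcing r) {a b c : V} (hab : G.Adj a b) (hac : G.Adj a c)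
    (rab : r a b) (rbc : r b c) (rca : r c a) : False := by
  by_cases hbc : G.Adj b c
  · exact hG.not_isCyclicTriangle hr hf ⟨hab, hbc, hac.symm, rab, rbc, rca⟩
  · exact hr.asymm rca ((hf hab hac hbc).1 rab)

lemma IsCompatibleTournament.isTransitiveTournament_of_isPrime
    (h : G.IsCompatibleTournament r) (hG : G.IsPrime) : IsTransitiveTournament r := by
  refine h.isTransitiveTournament fun a b c rab rbc rca => ?_
  have hc : ∀ {u v}, r u v → ¬ G.Adj u v → Gᶜ.Adj u v :=
    fun huv hn => (G.compl_adj _ _).2 ⟨h.ne huv, hn⟩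
  have key : ∀ {H : SimpleGraph V}, H.IsPrime → H.IsCompatibleTournament r →
      ∀ {x y z}, H.Adj x y → H.Adj x z → r x y → r y z → r z x → False :=
    fun hH hr => hH.not_cycle_of_adj_of_adj hr.toIsTournament hr.respectsForcing
  by_cases hab : G.Adj a b <;> by_cases hbc : G.Adj b c <;> by_cases hca : G.Adj c a
  all_goals first
    | exact key hG h hab hca.symm rab rbc rca
    | exact key hG h hbc hab.symm rbc rca rab
    | exact key hG h hca hbc.symm rca rab rbc
    | exact key hG.compl h.compl (hc rab hab) (hc rca hca).symm rab rbc rca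
    | exact key hG.compl h.compl (hc rbc hbc) (hc rab hab).symm rbc rca rab
    | exact key hG.compl h.compl (hc rca hca) (hc rbc hbc).symm rca rab rbc

structure IsRealizer (G : SimpleGraph V) (r s : V → V → Prop) : Prop where
  left : IsTransitiveTournament r
  right : IsTransitiveTournament s
  adj_iff : ∀ u v, G.Adj u v ↔ r u v ∧ s v u ∨ r v u ∧ s u v

lemma isPermutationGraph_iff_exists_isRealizer [Fintype V] :
    IsPermutationGraph G ↔ ∃ r s, G.IsRealizer r s := by
  constructor
  · rintro ⟨n, π, ⟨φ⟩⟩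
    refine ⟨fun u v => φ u < φ v, fun u v => π (φ u) < π (φ v),
      isTransitiveTournament_lt_comp φ.injective,
      isTransitiveTournament_lt_comp (π.injective.comp φ.injective), fun _ _ => φ.map_adj_iff.symm⟩
  · rintro ⟨r, s, h⟩
    obtain ⟨e₁, he₁⟩ := h.left.exists_equiv_fin
    obtain ⟨e₂, he₂⟩ := h.right.exists_equiv_fin
    refine ⟨_, e₁.symm.trans e₂, ⟨e₁, fun {u v} => ?_⟩⟩
    change (e₁ u < e₁ v ∧ e₂ (e₁.symm (e₁ v)) < e₂ (e₁.symm (e₁ u))) ∨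
      (e₁ v < e₁ u ∧ e₂ (e₁.symm (e₁ u)) < e₂ (e₁.symm (e₁ v))) ↔ G.Adj u v
    simp only [Equiv.symm_apply_apply, ← he₁, ← he₂, h.adj_iff]

lemma IsRealizer.respectsForcing {s : V → V → Prop} (h : G.IsRealizer r s) :
    G.RespectsForcing r := by
  suffices ∀ ⦃v w x⦄, G.Adj v w → G.Adj v x → ¬ G.Adj w x → r v w → r v x from
    fun v w x hvw hvx hwx => ⟨this hvw hvx hwx, this hvx hvw (mt G.adj_symm hwx)⟩
  intro v w x hvw hvx hwx rvw
  refine by_contra fun rvx => hwx ?_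
  have rxv := (h.left.not_iff hvx.ne).1 rvx
  have swv : s w v := (((h.adj_iff v w).1 hvw).resolve_right fun h' => h.left.asymm rvw h'.1).2
  have svx : s v x := (((h.adj_iff v x).1 hvx).resolve_left fun h' => rvx h'.1).2
  exact (h.adj_iff w x).2 (Or.inr ⟨h.left.trans rxv rvw, h.right.trans swv svx⟩)

lemma IsRealizer.respectsForcing_compl {s : V → V → Prop} (h : G.IsRealizer r s) :
    Gᶜ.RespectsForcing r := by
  suffices ∀ ⦃v w x⦄, Gᶜ.Adj v w → Gᶜ.Adj v x → ¬ Gᶜ.Adj w x → r v w → r v x from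
    fun v w x hvw hvx hwx => ⟨this hvw hvx hwx, this hvx hvw (mt Gᶜ.adj_symm hwx)⟩
  intro v w x hvw hvx hwx rvw
  rw [compl_adj] at hvw hvx hwx
  refine by_contra fun rvx => ?_
  have rxv := (h.left.not_iff hvx.1).1 rvx
  have svw : s v w := (h.right.not_iff hvw.1.symm).1 fun swv =>
    hvw.2 ((h.adj_iff v w).2 (Or.inl ⟨rvw, swv⟩))
  have sxv : s x v := (h.right.not_iff hvx.1).1 fun svx =>
    hvx.2 ((h.adj_iff v x).2 (Or.inr ⟨rxv, svx⟩))
  have hwx' : w ≠ x := by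
    rintro rfl
    exact rvx rvw
  rcases (h.adj_iff w x).1 (not_not.1 (not_and.1 hwx hwx')) with ⟨rwx, -⟩ | ⟨-, swx⟩
  · exact h.left.asymm rwx (h.left.trans rxv rvw)
  · exact h.right.asymm swx (h.right.trans sxv svw)

lemma IsRealizer.isCompatibleTournament {s : V → V → Prop} (h : G.IsRealizer r s) :
    G.IsCompatibleTournament r :=
  ⟨h.left.toIsTournament, h.respectsForcing, h.respectsForcing_compl⟩

lemma IsCompatibleTournament.isRealizer_of_isPrime (h : G.IsCompatibleTournament r)
    (hG : G.IsPrime) : G.IsRealizer r (G.reverseOn r) where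
  left := h.isTransitiveTournament_of_isPrime hG
  right := h.reverseOn.isTransitiveTournament_of_isPrime hG
  adj_iff u v := by
    by_cases huv : G.Adj u v
    · rw [reverseOn_of_adj huv, reverseOn_of_adj huv.symm, and_self, and_self]
      exact iff_of_true huv (h.total huv.ne)
    · rw [reverseOn_of_not_adj huv, reverseOn_of_not_adj (mt G.adj_symm huv)]
      exact iff_of_false huv (by rintro (⟨ruv, rvu⟩ | ⟨rvu, ruv⟩) <;> exact h.asymm ruv rvu)

section Substitution

variable {M : Set V} {x₀ : V}

open scoped Classical in
noncomputable def collapse (M : Set V) (x₀ : V) (u : V) : ↥(insert x₀ Mᶜ) :=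
  if hu : u ∈ M then ⟨x₀, Set.mem_insert _ _⟩ else ⟨u, Set.mem_insert_of_mem _ hu⟩

lemma collapse_of_mem {u : V} (hu : u ∈ M) : collapse M x₀ u = ⟨x₀, Set.mem_insert _ _⟩ := by
  simp [collapse, hu]

lemma coe_collapse_of_notMem {u : V} (hu : u ∉ M) : (collapse M x₀ u : V) = u := by
  simp [collapse, hu]

lemma eq_or_mem_of_collapse_eq (hx₀ : x₀ ∈ M) {u v : V}
    (h : collapse M x₀ u = collapse M x₀ v) : u = v ∨ u ∈ M ∧ v ∈ M := by
  by_cases hu : u ∈ M <;> by_cases hv : v ∈ M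
  · exact Or.inr ⟨hu, hv⟩
  all_goals
    have h := congrArg Subtype.val h
    simp only [collapse, hu, hv, dite_true, dite_false] at h
  · exact absurd (h ▸ hx₀) hv
  · exact absurd (h ▸ hx₀) hu
  · exact Or.inl h

lemma IsModule.adj_iff_adj_collapse (hM : G.IsModule M) (hx₀ : x₀ ∈ M) {u v : V}
    (huv : ¬ (u ∈ M ∧ v ∈ M)) : G.Adj u v ↔ G.Adj (collapse M x₀ u) (collapse M x₀ v) := by
  by_cases hu : u ∈ M
  · have hv : v ∉ M := fun hv => huv ⟨hu, hv⟩
    rw [collapse_of_mem hu, coe_collapse_of_notMem hv, G.adj_comm u, G.adj_comm x₀]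
    exact hM hv hu hx₀
  · by_cases hv : v ∈ M
    · rw [collapse_of_mem hv, coe_collapse_of_notMem hu]
      exact hM hu hv hx₀
    · rw [coe_collapse_of_notMem hu, coe_collapse_of_notMem hv]

def substitute (M : Set V) (x₀ : V) (rM : M → M → Prop)
    (rW : ↥(insert x₀ Mᶜ) → ↥(insert x₀ Mᶜ) → Prop) (u v : V) : Prop :=
  rW (collapse M x₀ u) (collapse M x₀ v) ∨ ∃ (hu : u ∈ M) (hv : v ∈ M), rM ⟨u, hu⟩ ⟨v, hv⟩

variable {rM : M → M → Prop} {rW : ↥(insert x₀ Mᶜ) → ↥(insert x₀ Mᶜ) → Prop}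

lemma substitute_iff_of_mem (hW : IsTournament rW) {u v : V} (hu : u ∈ M) (hv : v ∈ M) :
    substitute M x₀ rM rW u v ↔ rM ⟨u, hu⟩ ⟨v, hv⟩ := by
  rw [substitute, collapse_of_mem hu, collapse_of_mem hv, or_iff_right (hW.irrefl _)]
  exact ⟨fun ⟨_, _, h⟩ => h, fun h => ⟨hu, hv, h⟩⟩

lemma substitute_iff_collapse {u v : V} (huv : ¬ (u ∈ M ∧ v ∈ M)) :
    substitute M x₀ rM rW u v ↔ rW (collapse M x₀ u) (collapse M x₀ v) :=
  or_iff_left fun ⟨hu, hv, _⟩ => huv ⟨hu, hv⟩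

lemma _root_.IsTransitiveTournament.substitute (hx₀ : x₀ ∈ M) (hM : IsTransitiveTournament rM)
    (hW : IsTransitiveTournament rW) : IsTransitiveTournament (substitute M x₀ rM rW) where
  asymm u v := by
    by_cases huv : u ∈ M ∧ v ∈ M
    · rw [substitute_iff_of_mem hW.toIsTournament huv.1 huv.2,
        substitute_iff_of_mem hW.toIsTournament huv.2 huv.1]
      exact fun h => hM.asymm h
    · rw [substitute_iff_collapse huv, substitute_iff_collapse (huv ∘ And.symm)]
      exact fun h => hW.asymm h
  total u v hne := by
    by_cases huv : u ∈ M ∧ v ∈ M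
    · rw [substitute_iff_of_mem hW.toIsTournament huv.1 huv.2,
        substitute_iff_of_mem hW.toIsTournament huv.2 huv.1]
      exact hM.total fun h => hne (congrArg Subtype.val h)
    · rw [substitute_iff_collapse huv, substitute_iff_collapse (huv ∘ And.symm)]
      exact hW.total fun h => (eq_or_mem_of_collapse_eq hx₀ h).elim hne huv
  trans a b c := by
    rintro (hab | ⟨ha, hb, hab⟩) (hbc | ⟨hb, hc, hbc⟩)
    · exact Or.inl (hW.trans hab hbc)
    · rw [collapse_of_mem hb, ← collapse_of_mem hc] at hab
      exact Or.inl hab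
    · rw [collapse_of_mem hb, ← collapse_of_mem ha] at hbc
      exact Or.inl hbc
    · exact Or.inr ⟨ha, hc, hM.trans hab hbc⟩

lemma IsRealizer.substitute (hM : G.IsModule M) (hx₀ : x₀ ∈ M)
    {r₁ s₁ : M → M → Prop} {r₂ s₂ : ↥(insert x₀ Mᶜ) → ↥(insert x₀ Mᶜ) → Prop}
    (h₁ : (G.induce M).IsRealizer r₁ s₁) (h₂ : (G.induce (insert x₀ Mᶜ)).IsRealizer r₂ s₂) :
    G.IsRealizer (substitute M x₀ r₁ r₂) (substitute M x₀ s₁ s₂) where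
  left := h₁.left.substitute hx₀ h₂.left
  right := h₁.right.substitute hx₀ h₂.right
  adj_iff u v := by
    by_cases huv : u ∈ M ∧ v ∈ M
    · simp only [substitute_iff_of_mem h₂.left.toIsTournament huv.1 huv.2,
        substitute_iff_of_mem h₂.left.toIsTournament huv.2 huv.1,
        substitute_iff_of_mem h₂.right.toIsTournament huv.1 huv.2,
        substitute_iff_of_mem h₂.right.toIsTournament huv.2 huv.1]
      exact h₁.adj_iff ⟨u, huv.1⟩ ⟨v, huv.2⟩
    · simp only [substitute_iff_collapse huv, substitute_iff_collapse (huv ∘ And.symm)]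
      exact (hM.adj_iff_adj_collapse hx₀ huv).trans (h₂.adj_iff _ _)

end Substitution

theorem IsCompatibleTournament.exists_isRealizer [Finite V] (h : G.IsCompatibleTournament r) :
    ∃ r' s', G.IsRealizer r' s' := by
  induction hn : Nat.card V using Nat.strong_induction_on generalizing V with
  | _ n ih =>
    by_cases hG : G.IsPrime
    · exact ⟨r, _, h.isRealizer_of_isPrime hG⟩
    obtain ⟨M, hM, ⟨x₀, hx₀, y₀, hy₀, hxy⟩, hMV⟩ :
        ∃ M, G.IsModule M ∧ M.Nontrivial ∧ M ≠ Set.univ := by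
      simpa [IsPrime] using hG
    obtain ⟨z₀, hz₀⟩ := Set.ne_univ_iff_exists_notMem M |>.1 hMV
    have hy₀' : y₀ ∉ insert x₀ Mᶜ := by simp [hxy.symm, hy₀]
    obtain ⟨r₁, s₁, h₁⟩ :=
      ih _ (hn ▸ Finite.card_subtype_lt hz₀) (h.comap (Embedding.induce M)) rfl
    obtain ⟨r₂, s₂, h₂⟩ :=
      ih _ (hn ▸ Finite.card_subtype_lt hy₀') (h.comap (Embedding.induce (insert x₀ Mᶜ))) rfl
    exact ⟨_, _, h₁.substitute hM hx₀ h₂⟩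

lemma exists_zmod_two_solution_iff :
    (∃ β : V → V → ZMod 2,
        (∀ v w : V, v ≠ w → β v w + β w v = 1) ∧
        (∀ v w x : V, v ≠ w → v ≠ x → w ≠ x →
          ¬ G.Adj v w → ¬ G.Adj v x → G.Adj w x → β v w + β v x = 0) ∧
        (∀ v w x : V, v ≠ w → v ≠ x → w ≠ x →
          G.Adj v w → G.Adj v x → ¬ G.Adj w x → β v w + β v x = 0)) ↔
      ∃ r, G.IsCompatibleTournament r := by
  constructor
  · rintro ⟨β, hA, hB, hC⟩
    have sum_eq_one : ∀ x y : ZMod 2, x + y = 1 → (x = 1 ↔ ¬ y = 1) := by decide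
    have forcing : ∀ {v w x : V}, v ≠ w → v ≠ x → β v w + β v x = 0 →
        (v ≠ w ∧ β v w = 1 ↔ v ≠ x ∧ β v x = 1) := fun hvw hvx h => by
      rw [CharTwo.add_eq_zero.1 h, iff_true_intro hvw, iff_true_intro hvx]
    refine ⟨fun v w => v ≠ w ∧ β v w = 1, ⟨?_, ?_⟩, ?_, ?_⟩
    · rintro v w ⟨hvw, h₁⟩ ⟨-, h₂⟩
      exact (sum_eq_one _ _ (hA v w hvw)).1 h₁ h₂
    · intro v w hvw
      by_cases h₁ : β v w = 1
      · exact Or.inl ⟨hvw, h₁⟩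
      · exact Or.inr ⟨hvw.symm, not_not.1 (mt (sum_eq_one _ _ (hA v w hvw)).2 h₁)⟩
    · intro v w x hvw hvx hwx
      rcases eq_or_ne w x with rfl | hwx'
      · rfl
      exact forcing hvw.ne hvx.ne (hC v w x hvw.ne hvx.ne hwx' hvw hvx hwx)
    · intro v w x hvw hvx hwx
      rw [compl_adj] at hvw hvx hwx
      rcases eq_or_ne w x with rfl | hwx'
      · rfl
      exact forcing hvw.1 hvx.1
        (hB v w x hvw.1 hvx.1 hwx' hvw.2 hvx.2 (not_not.1 (not_and.1 hwx hwx')))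
  · rintro ⟨r, h⟩
    classical
    have hβ : ∀ {v w x}, (r v w ↔ r v x) →
        ((if r v w then 1 else 0 : ZMod 2) + if r v x then 1 else 0) = 0 := fun hrw => by
      rw [hrw, CharTwo.add_self_eq_zero]
    refine ⟨fun v w => if r v w then 1 else 0, fun v w hvw => ?_,
      fun v w x hvw hvx hwx hnvw hnvx hwx' => hβ ?_, fun v w x _ _ _ hvw hvx hwx => hβ ?_⟩
    · rcases h.total hvw with hr | hr <;> simp [hr, h.asymm hr]
    · exact h.respectsForcing_compl ((G.compl_adj v w).2 ⟨hvw, hnvw⟩)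
        ((G.compl_adj v x).2 ⟨hvx, hnvx⟩) fun hc => ((G.compl_adj w x).1 hc).2 hwx'
    · exact h.respectsForcing hvw hvx hwx

end SimpleGraph

theorem permutationGraph_iff_general {V : Type*} [Fintype V]
    (G : SimpleGraph V) :
    IsPermutationGraph G ↔
      ∃ β : V → V → ZMod 2,
        (∀ v w : V, v ≠ w → β v w + β w v = 1) ∧
        (∀ v w x : V, v ≠ w → v ≠ x → w ≠ x →
          ¬ G.Adj v w → ¬ G.Adj v x → G.Adj w x → β v w + β v x = 0) ∧
        (∀ v w x : V, v ≠ w → v ≠ x → w ≠ x →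
          G.Adj v w → G.Adj v x → ¬ G.Adj w x → β v w + β v x = 0) := by
  rw [SimpleGraph.exists_zmod_two_solution_iff,
    SimpleGraph.isPermutationGraph_iff_exists_isRealizer]
  exact ⟨fun ⟨_, _, h⟩ => ⟨_, h.isCompatibleTournament⟩,
    fun ⟨_, h⟩ => h.exists_isRealizer⟩

/-- Algebraic characterization of permutation graphs: `G` is a permutation graph iff the
system of equations (a), (b), (c) below has a solution over `GF(2)`. -/
theorem permutationGraph_iff {V : Type*} [Fintype V] [DecidableEq V]
    (G : SimpleGraph V) :
    IsPermutationGraph G ↔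
      ∃ β : V → V → ZMod 2,
        (∀ v w : V, v ≠ w → β v w + β w v = 1) ∧
        (∀ v w x : V, v ≠ w → v ≠ x → w ≠ x →
          ¬ G.Adj v w → ¬ G.Adj v x → G.Adj w x → β v w + β v x = 0) ∧
        (∀ v w x : V, v ≠ w → v ≠ x → w ≠ x →
          G.Adj v w → G.Adj v x → ¬ G.Adj w x → β v w + β v x = 0) :=
  permutationGraph_iff_general G
end
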